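/- arXiv:1310.5014 — 9 statements merged into one kernel-verified Lean document; each statement's English description precedes it below -/
import Mathlib

section
/- Let H be a complex Hilbert space and A ⊆ H ⊕ H a monotone relation, i.e. for all (u,v),(x,y) ∈ A one has Re⟨u−x, v−y⟩ ≥ 0. Then A is maximal monotone (has no proper monotone extension) if and only if for every λ > 0 the relation 1 + λA is onto, i.e. {x + λy : (x,y) ∈ A} = H, and this in turn is equivalent to the existence of some λ > 0 for which 1 + λA is onto. -/
/-! After replacing `A` by `{(x, λy - w) : (x, y) ∈ A}` and passing to the real inner product
`Re⟪·,·⟫`, surjectivity of `1 + λA` reduces to finding `z` with `⟪z - x, z + y⟫ ≤ 0` for all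
`(x, y) ∈ A`: maximality then puts `(z, (w - z)/λ)` in `A`. Each such condition says that `z` lies
in a closed ball, and closed balls of a Hilbert space are weakly compact (Banach–Alaoglu through
the Riesz isomorphism), so it suffices to treat finite `A`. For finite `A`, minimize
`g(z) = max ⟪z - x, z + y⟫`, whose sublevel sets are again intersections of balls. At a minimizer
`z₀` the point `0` is a convex combination of the gradients `(z₀ - x) + (z₀ + y)` of the active
pieces, and monotonicity of `A` turns this into `g(z₀) ≤ 0`. Conversely, if `1 + λA` is onto, a
pair monotonically related to `A` is forced to coincide with the pair of `A` having the same image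
under `1 + λA`. -/

/-- A relation `A ⊆ H ⊕ H` is monotone if `Re⟪u - x, v - y⟫ ≥ 0` for all
`(u,v), (x,y) ∈ A`. -/
def MonotoneRel {H : Type*} [NormedAddCommGroup H] [InnerProductSpace ℂ H]
    (A : Set (H × H)) : Prop :=
  ∀ p ∈ A, ∀ q ∈ A, 0 ≤ (inner ℂ (p.1 - q.1) (p.2 - q.2) : ℂ).re

/-- A relation is maximal monotone if it is monotone and admits no proper monotone
extension. -/
def MaximalMonotoneRel {H : Type*} [NormedAddCommGroup H] [InnerProductSpace ℂ H]
    (A : Set (H × H)) : Prop :=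
  MonotoneRel A ∧ ∀ B : Set (H × H), MonotoneRel B → A ⊆ B → B = A

open Metric Topology InnerProductSpace
open scoped RealInnerProductSpace

section Real

variable {E : Type*} [NormedAddCommGroup E] [InnerProductSpace ℝ E]

theorem exists_forall_mem_closedBall_of_finite [CompleteSpace E] {ι : Type*} (c : ι → E)
    (r : ι → ℝ) (h : ∀ u : Finset ι, ∃ z, ∀ i ∈ u, z ∈ closedBall (c i) (r i)) :
    ∃ z, ∀ i, z ∈ closedBall (c i) (r i) := by
  classical
  rcases isEmpty_or_nonempty ι with hι | ⟨⟨i₀⟩⟩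
  · exact ⟨0, isEmptyElim⟩
  set K : ι → Set (WeakDual ℝ E) := fun i =>
    WeakDual.toStrongDual ⁻¹' closedBall (toDual ℝ E (c i)) (r i)
  set φ : E → WeakDual ℝ E := fun z => StrongDual.toWeakDual (toDual ℝ E z)
  have hφ : ∀ z i, φ z ∈ K i ↔ z ∈ closedBall (c i) (r i) := fun z i => by
    simp [K, φ, LinearIsometryEquiv.dist_map]
  obtain ⟨f, -, hf⟩ := IsCompact.inter_iInter_nonempty
    (WeakDual.isCompact_closedBall (toDual ℝ E (c i₀)) (r i₀)) K
    (fun i => WeakDual.isClosed_closedBall _ _) fun u => by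
      obtain ⟨z, hz⟩ := h (insert i₀ u)
      exact ⟨φ z, (hφ z i₀).2 (hz i₀ (u.mem_insert_self i₀)),
        Set.mem_iInter₂.2 fun i hi => (hφ z i).2 (hz i (Finset.mem_insert_of_mem hi))⟩
  refine ⟨(toDual ℝ E).symm (WeakDual.toStrongDual f), fun i => (hφ _ i).1 ?_⟩
  simpa [φ] using Set.mem_iInter.1 hf i

theorem inner_sub_add_eq_norm_sq_sub (x y z : E) :
    ⟪z - x, z + y⟫ = ‖z - (2⁻¹ : ℝ) • (x - y)‖ ^ 2 - ‖(2⁻¹ : ℝ) • (x + y)‖ ^ 2 := by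
  simp only [← real_inner_self_eq_norm_sq, inner_add_left, inner_add_right, inner_sub_left,
    inner_sub_right, real_inner_smul_left, real_inner_smul_right, real_inner_comm x z,
    real_inner_comm y z, real_inner_comm x y]
  ring

theorem inner_sub_add_le_iff_mem_closedBall {x y z : E} {t : ℝ}
    (ht : -‖(2⁻¹ : ℝ) • (x + y)‖ ^ 2 ≤ t) :
    ⟪z - x, z + y⟫ ≤ t ↔
      z ∈ closedBall ((2⁻¹ : ℝ) • (x - y)) √(‖(2⁻¹ : ℝ) • (x + y)‖ ^ 2 + t) := by
  rw [mem_closedBall, Real.le_sqrt dist_nonneg (by linarith), dist_eq_norm,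
    inner_sub_add_eq_norm_sq_sub]
  constructor <;> intro h <;> linarith

theorem inner_add_sub_add_add (x y z d : E) :
    ⟪z + d - x, z + d + y⟫ = ⟪z - x, z + y⟫ + ⟪d, z - x + (z + y)⟫ + ‖d‖ ^ 2 := by
  simp only [← real_inner_self_eq_norm_sq, inner_add_left, inner_add_right, inner_sub_left,
    inner_sub_right, real_inner_comm d z, real_inner_comm d x]
  ring

theorem sum_sum_inner_sub_sub {ι : Type*} (s : Finset ι) (w : ι → ℝ) (hw : ∑ i ∈ s, w i = 1)
    (a b : ι → E) :
    ∑ i ∈ s, ∑ j ∈ s, w i * w j * ⟪a i - a j, b i - b j⟫ =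
      2 * (∑ i ∈ s, w i * ⟪a i, b i⟫ - ⟪∑ i ∈ s, w i • a i, ∑ i ∈ s, w i • b i⟫) := by
  set a' := ∑ i ∈ s, w i • a i
  set b' := ∑ i ∈ s, w i • b i
  set d := ∑ i ∈ s, w i * ⟪a i, b i⟫
  have hrow : ∀ i, ∑ j ∈ s, w j * ⟪a i - a j, b i - b j⟫ =
      ⟪a i, b i⟫ - ⟪a i, b'⟫ - ⟪a', b i⟫ + d := fun i => by
    simp only [a', b', d, inner_sub_left, inner_sub_right, mul_sub, Finset.sum_sub_distrib,
      ← Finset.sum_mul, hw, one_mul, inner_sum, sum_inner, real_inner_smul_left,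
      real_inner_smul_right]
    ring
  have hleft : ∑ i ∈ s, w i * ⟪a i, b'⟫ = ⟪a', b'⟫ := by
    simp only [a', sum_inner, real_inner_smul_left]
  have hright : ∑ i ∈ s, w i * ⟪a', b i⟫ = ⟪a', b'⟫ := by
    simp only [b', inner_sum, real_inner_smul_right]
  simp only [mul_assoc, ← Finset.mul_sum, hrow, mul_add, mul_sub, Finset.sum_add_distrib,
    Finset.sum_sub_distrib, ← Finset.sum_mul, hw, one_mul, hleft, hright]
  ring

theorem le_inner_sub_add_of_mem_convexHull {T : Finset (E × E)}
    (hT : ∀ p ∈ T, ∀ r ∈ T, 0 ≤ ⟪p.1 - r.1, p.2 - r.2⟫) {z : E} {m : ℝ}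
    (hm : ∀ p ∈ T, ⟪z - p.1, z + p.2⟫ = m) {q : E × E}
    (hq : q ∈ convexHull ℝ (T : Set (E × E))) : m ≤ ⟪z - q.1, z + q.2⟫ := by
  obtain ⟨w, hw₀, hw₁, rfl⟩ := Finset.mem_convexHull'.1 hq
  have key := sum_sum_inner_sub_sub T w hw₁ (fun p => z - p.1) (fun p => z + p.2)
  have hfst : ∑ p ∈ T, w p • (z - p.1) = z - (∑ p ∈ T, w p • p).1 := by
    simp [smul_sub, Finset.sum_sub_distrib, ← Finset.sum_smul, hw₁, Prod.fst_sum]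
  have hsnd : ∑ p ∈ T, w p • (z + p.2) = z + (∑ p ∈ T, w p • p).2 := by
    simp [smul_add, Finset.sum_add_distrib, ← Finset.sum_smul, hw₁, Prod.snd_sum]
  have hdiag : ∑ p ∈ T, w p * ⟪z - p.1, z + p.2⟫ = m := by
    rw [Finset.sum_congr rfl fun p hp => by rw [hm p hp], ← Finset.sum_mul, hw₁, one_mul]
  have hnonpos : ∑ p ∈ T, ∑ r ∈ T, w p * w r * ⟪z - p.1 - (z - r.1), z + p.2 - (z + r.2)⟫ ≤ 0 :=
    Finset.sum_nonpos fun p hp => Finset.sum_nonpos fun r hr => by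
      have h := hT p hp r hr
      rw [sub_sub_sub_cancel_left, add_sub_add_left_eq_sub, ← neg_sub, inner_neg_left]
      exact mul_nonpos_of_nonneg_of_nonpos (mul_nonneg (hw₀ p hp) (hw₀ r hr)) (by linarith)
  rw [key, hfst, hsnd, hdiag] at hnonpos
  linarith

noncomputable def supInner (F : Finset (E × E)) (hF : F.Nonempty) (z : E) : ℝ :=
  F.sup' hF fun p => ⟪z - p.1, z + p.2⟫

theorem inner_sub_add_le_supInner {F : Finset (E × E)} (hF : F.Nonempty) {p : E × E}
    (hp : p ∈ F) (z : E) : ⟪z - p.1, z + p.2⟫ ≤ supInner F hF z :=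
  Finset.le_sup' (fun p => ⟪z - p.1, z + p.2⟫) hp

theorem zero_mem_convexHull_of_isMin_supInner {F : Finset (E × E)} (hF : F.Nonempty) {z₀ : E}
    (hmin : ∀ z, supInner F hF z₀ ≤ supInner F hF z) :
    ∃ T ⊆ F, (∀ p ∈ T, ⟪z₀ - p.1, z₀ + p.2⟫ = supInner F hF z₀) ∧
      (0 : E) ∈ convexHull ℝ ((fun p => z₀ - p.1 + (z₀ + p.2)) '' (T : Set (E × E))) := by
  classical
  set m := supInner F hF z₀
  set grad : E × E → E := fun p => z₀ - p.1 + (z₀ + p.2)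
  set T := F.filter fun p => ⟪z₀ - p.1, z₀ + p.2⟫ = m
  refine ⟨T, Finset.filter_subset _ _, fun p hp => (Finset.mem_filter.1 hp).2, ?_⟩
  obtain ⟨p₀, hp₀, hp₀m⟩ := Finset.exists_mem_eq_sup' hF fun p => ⟪z₀ - p.1, z₀ + p.2⟫
  set C := convexHull ℝ (grad '' T)
  have hCne : C.Nonempty :=
    ⟨grad p₀, subset_convexHull ℝ _ ⟨p₀, Finset.mem_filter.2 ⟨hp₀, hp₀m.symm⟩, rfl⟩⟩
  by_contra h₀
  obtain ⟨v, hvC, hv⟩ := exists_norm_eq_iInf_of_complete_convex hCne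
    ((T.finite_toSet.image grad).isCompact_convexHull (𝕜 := ℝ)).isComplete
    (convex_convexHull ℝ _) 0
  have hv₀ : 0 < ‖v‖ ^ 2 := by
    have : v ≠ 0 := by rintro rfl; exact h₀ hvC
    positivity
  -- the minimal-norm point `v` of `C` makes an acute angle with every active gradient
  set d := -v
  have hd : ∀ p ∈ T, ⟪d, grad p⟫ ≤ -‖v‖ ^ 2 := fun p hp => by
    have h := (norm_eq_iInf_iff_real_inner_le_zero (convex_convexHull ℝ _) hvC).1 hv (grad p)
      (subset_convexHull ℝ _ ⟨p, hp, rfl⟩)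
    rw [zero_sub, inner_neg_left, inner_sub_right, real_inner_self_eq_norm_sq] at h
    rw [inner_neg_left]
    linarith
  have hdescent : ∀ p ∈ F, ∀ᶠ ε in 𝓝[>] (0 : ℝ), ⟪z₀ + ε • d - p.1, z₀ + ε • d + p.2⟫ < m := by
    intro p hp
    simp only [inner_add_sub_add_add, real_inner_smul_left, norm_smul, mul_pow,
      Real.norm_eq_abs, sq_abs]
    by_cases hpT : p ∈ T
    · have hq : ⟪z₀ - p.1, z₀ + p.2⟫ = m := (Finset.mem_filter.1 hpT).2
      have hsmall : ∀ᶠ ε in 𝓝[>] (0 : ℝ), ε * ‖d‖ ^ 2 < ‖v‖ ^ 2 :=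
        ((continuous_id.mul continuous_const).tendsto' 0 0 (by simp)).eventually
          (gt_mem_nhds hv₀) |>.filter_mono nhdsWithin_le_nhds
      filter_upwards [hsmall, self_mem_nhdsWithin] with ε hε (hε₀ : 0 < ε)
      nlinarith [hd p hpT]
    · have hq : ⟪z₀ - p.1, z₀ + p.2⟫ < m := lt_of_le_of_ne
        (inner_sub_add_le_supInner hF hp z₀) fun h => hpT (Finset.mem_filter.2 ⟨hp, h⟩)
      refine (Continuous.tendsto' ?_ 0 _ (by simp) |>.eventually (gt_mem_nhds hq)).filter_mono
        nhdsWithin_le_nhds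
      fun_prop
  obtain ⟨ε, hε⟩ := ((Filter.eventually_all_finset F).2 hdescent).exists
  exact (hmin (z₀ + ε • d)).not_gt ((Finset.sup'_lt_iff hF).2 hε)

theorem exists_isMin_supInner [CompleteSpace E] (F : Finset (E × E)) (hF : F.Nonempty) :
    ∃ z₀, ∀ z, supInner F hF z₀ ≤ supInner F hF z := by
  have hlow : ∀ p ∈ F, ∀ z, -‖(2⁻¹ : ℝ) • (p.1 + p.2)‖ ^ 2 ≤ supInner F hF z := fun p hp z => by
    refine le_trans ?_ (inner_sub_add_le_supInner hF hp z)
    rw [inner_sub_add_eq_norm_sq_sub]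
    linarith [sq_nonneg ‖z - (2⁻¹ : ℝ) • (p.1 - p.2)‖]
  obtain ⟨p₀, hp₀⟩ := id hF
  have hbdd : BddBelow (Set.range (supInner F hF)) := ⟨_, Set.forall_mem_range.2 (hlow p₀ hp₀)⟩
  set m := ⨅ z, supInner F hF z
  have hm : ∀ p ∈ F, -‖(2⁻¹ : ℝ) • (p.1 + p.2)‖ ^ 2 ≤ m := fun p hp => le_ciInf (hlow p hp)
  -- the sublevel sets `{supInner ≤ t}`, `t > m`, are finite intersections of closed balls
  obtain ⟨z₀, hz₀⟩ := exists_forall_mem_closedBall_of_finite (ι := Set.Ioi m × F)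
    (fun i => (2⁻¹ : ℝ) • (i.2.1.1 - i.2.1.2))
    (fun i => √(‖(2⁻¹ : ℝ) • (i.2.1.1 + i.2.1.2)‖ ^ 2 + i.1)) fun u => by
      set t₀ := (insert (m + 1) (u.image fun i => (i.1 : ℝ))).min' (Finset.insert_nonempty _ _)
      have ht₀ : m < t₀ := (Finset.lt_min'_iff _ _).2 <| by
        simp only [Finset.mem_insert, Finset.mem_image]
        rintro _ (rfl | ⟨i, -, rfl⟩)
        exacts [lt_add_one m, i.1.2]
      obtain ⟨z, hz⟩ := exists_lt_of_ciInf_lt ht₀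
      refine ⟨z, fun i hi => (inner_sub_add_le_iff_mem_closedBall ?_).1 ?_⟩
      · linarith [hm _ i.2.2, (Set.mem_Ioi.1 i.1.2).le]
      · calc _ ≤ supInner F hF z := inner_sub_add_le_supInner _ i.2.2 z
          _ ≤ t₀ := hz.le
          _ ≤ i.1 := Finset.min'_le _ _ (Finset.mem_insert_of_mem (Finset.mem_image_of_mem _ hi))
  refine ⟨z₀, fun z => le_trans (Finset.sup'_le _ _ fun p hp => ?_) (ciInf_le hbdd z)⟩
  refine le_of_forall_gt_imp_ge_of_dense fun t ht => ?_
  exact (inner_sub_add_le_iff_mem_closedBall (by linarith [hm p hp])).2 (hz₀ (⟨t, ht⟩, ⟨p, hp⟩))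

theorem exists_forall_inner_sub_add_nonpos_of_finset [CompleteSpace E] (F : Finset (E × E))
    (hF : ∀ p ∈ F, ∀ r ∈ F, 0 ≤ ⟪p.1 - r.1, p.2 - r.2⟫) :
    ∃ z, ∀ p ∈ F, ⟪z - p.1, z + p.2⟫ ≤ 0 := by
  rcases F.eq_empty_or_nonempty with rfl | hne
  · exact ⟨0, by simp⟩
  obtain ⟨z₀, hz₀⟩ := exists_isMin_supInner F hne
  obtain ⟨T, hTF, hTm, h₀⟩ := zero_mem_convexHull_of_isMin_supInner hne hz₀
  let grad : E × E →ᵃ[ℝ] E :=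
    ⟨fun p => z₀ - p.1 + (z₀ + p.2), LinearMap.snd ℝ E E - LinearMap.fst ℝ E E,
      fun p v => by simp only [vadd_eq_add, Prod.fst_add, Prod.snd_add, LinearMap.sub_apply,
        LinearMap.fst_apply, LinearMap.snd_apply]; abel⟩
  obtain ⟨q, hq, hq₀⟩ := (grad.image_convexHull (T : Set (E × E))).symm ▸ h₀
  have hm := le_inner_sub_add_of_mem_convexHull
    (fun p hp r hr => hF p (hTF hp) r (hTF hr)) hTm hq
  have hq₀' : z₀ + q.2 = -(z₀ - q.1) := eq_neg_of_add_eq_zero_right hq₀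
  rw [hq₀', inner_neg_right, real_inner_self_eq_norm_sq] at hm
  exact ⟨z₀, fun p hp => (inner_sub_add_le_supInner hne hp z₀).trans
    (hm.trans (neg_nonpos.2 (sq_nonneg _)))⟩

theorem exists_forall_inner_sub_add_nonpos [CompleteSpace E] {A : Set (E × E)}
    (hA : ∀ p ∈ A, ∀ r ∈ A, 0 ≤ ⟪p.1 - r.1, p.2 - r.2⟫) :
    ∃ z, ∀ p ∈ A, ⟪z - p.1, z + p.2⟫ ≤ 0 := by
  have hball : ∀ (p : E × E) z, ⟪z - p.1, z + p.2⟫ ≤ 0 ↔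
      z ∈ closedBall ((2⁻¹ : ℝ) • (p.1 - p.2)) ‖(2⁻¹ : ℝ) • (p.1 + p.2)‖ := fun p z => by
    rw [inner_sub_add_le_iff_mem_closedBall (neg_nonpos.2 (sq_nonneg _)), add_zero,
      Real.sqrt_sq (norm_nonneg _)]
  obtain ⟨z, hz⟩ := exists_forall_mem_closedBall_of_finite (ι := A)
    (fun p => (2⁻¹ : ℝ) • (p.1.1 - p.1.2)) (fun p => ‖(2⁻¹ : ℝ) • (p.1.1 + p.1.2)‖) fun u => by
      obtain ⟨z, hz⟩ := exists_forall_inner_sub_add_nonpos_of_finset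
        (u.map (Function.Embedding.subtype _)) <| Finset.forall_mem_map.2 fun p _ =>
          Finset.forall_mem_map.2 fun r _ => hA _ p.2 _ r.2
      exact ⟨z, fun p hp => (hball _ z).1 (hz _ (Finset.mem_map_of_mem _ hp))⟩
  exact ⟨z, fun p hp => (hball p z).2 (hz ⟨p, hp⟩)⟩

end Real

section Complex

variable {H : Type*} [NormedAddCommGroup H] [InnerProductSpace ℂ H] {A : Set (H × H)}

theorem MaximalMonotoneRel.mem_of_forall_re_inner_nonneg (hA : MaximalMonotoneRel A) {x y : H}
    (h : ∀ p ∈ A, 0 ≤ (inner ℂ (x - p.1) (y - p.2)).re) : (x, y) ∈ A := by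
  have hmono : MonotoneRel (insert (x, y) A) := by
    rintro p (rfl | hp) q (rfl | hq)
    · simp
    · exact h q hq
    · rw [← neg_sub x, ← neg_sub y, inner_neg_neg]
      exact h p hp
    · exact hA.1 p hp q hq
  exact hA.2 _ hmono (Set.subset_insert _ _) ▸ Set.mem_insert _ _

theorem MonotoneRel.maximalMonotoneRel_of_range_add_smul_eq_univ (hA : MonotoneRel A) {l : ℝ}
    (hl : 0 < l) (h : {z : H | ∃ p ∈ A, z = p.1 + (l : ℂ) • p.2} = Set.univ) :
    MaximalMonotoneRel A := by
  refine ⟨hA, fun B hB hAB => (Set.Subset.antisymm (fun ⟨x, y⟩ hxy => ?_) hAB)⟩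
  obtain ⟨⟨u, v⟩, huv, he⟩ : x + (l : ℂ) • y ∈ {z : H | ∃ p ∈ A, z = p.1 + (l : ℂ) • p.2} :=
    h ▸ Set.mem_univ _
  have hx : x - u = (l : ℂ) • (v - y) := by
    rw [smul_sub]; linear_combination (norm := module) he
  have hmono := hB (x, y) hxy (u, v) (hAB huv)
  rw [hx, ← neg_sub v y, inner_neg_right, inner_smul_left, Complex.conj_ofReal, Complex.neg_re,
    Complex.re_ofReal_mul, ← RCLike.re_to_complex, inner_self_eq_norm_sq] at hmono
  have hvy : ‖v - y‖ ^ 2 ≤ 0 := by nlinarith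
  rw [sq_nonpos_iff, norm_eq_zero, sub_eq_zero] at hvy
  subst hvy
  rw [sub_self, smul_zero, sub_eq_zero] at hx
  exact hx ▸ huv

theorem MaximalMonotoneRel.range_add_smul_eq_univ [CompleteSpace H] (hA : MaximalMonotoneRel A)
    {l : ℝ} (hl : 0 < l) : {z : H | ∃ p ∈ A, z = p.1 + (l : ℂ) • p.2} = Set.univ := by
  let _ : InnerProductSpace ℝ H := InnerProductSpace.complexToReal
  refine Set.eq_univ_of_forall fun w => ?_
  obtain ⟨z, hz⟩ := exists_forall_inner_sub_add_nonpos
    (A := (fun p : H × H => (p.1, (l : ℂ) • p.2 - w)) '' A) <| by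
      rintro _ ⟨p, hp, rfl⟩ _ ⟨r, hr, rfl⟩
      rw [real_inner_eq_re_inner ℂ, RCLike.re_to_complex, sub_sub_sub_cancel_right, ← smul_sub,
        inner_smul_right, Complex.re_ofReal_mul]
      exact mul_nonneg hl.le (hA.1 p hp r hr)
  set y := (l : ℂ)⁻¹ • (w - z)
  have hl' : (l : ℂ) ≠ 0 := Complex.ofReal_ne_zero.2 hl.ne'
  refine ⟨(z, y), hA.mem_of_forall_re_inner_nonneg fun p hp => ?_, ?_⟩
  · have h := hz _ ⟨p, hp, rfl⟩
    have e : z + ((l : ℂ) • p.2 - w) = -((l : ℂ) • (y - p.2)) := by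
      simp only [y, smul_sub, smul_smul, mul_inv_cancel₀ hl', one_smul]; abel
    rw [real_inner_eq_re_inner ℂ, RCLike.re_to_complex, e, inner_neg_right, inner_smul_right,
      Complex.neg_re, Complex.re_ofReal_mul] at h
    nlinarith
  · simp only [y, smul_smul, mul_inv_cancel₀ hl', one_smul]; abel

end Complex

/-- Minty's theorem: for a monotone relation `A` on a complex Hilbert space,
maximal monotonicity is equivalent to surjectivity of `1 + λ A` for all `λ > 0`,
which in turn is equivalent to surjectivity of `1 + λ A` for some `λ > 0`. -/
theorem minty_theorem {H : Type*} [NormedAddCommGroup H] [InnerProductSpace ℂ H]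
    [CompleteSpace H] (A : Set (H × H)) (hA : MonotoneRel A) :
    (MaximalMonotoneRel A ↔
      ∀ l : ℝ, 0 < l → {z : H | ∃ p ∈ A, z = p.1 + (l : ℂ) • p.2} = Set.univ) ∧
    ((∀ l : ℝ, 0 < l → {z : H | ∃ p ∈ A, z = p.1 + (l : ℂ) • p.2} = Set.univ) ↔
      ∃ l : ℝ, 0 < l ∧ {z : H | ∃ p ∈ A, z = p.1 + (l : ℂ) • p.2} = Set.univ) := by
  refine ⟨⟨fun hmax l hl => hmax.range_add_smul_eq_univ hl, fun h => ?_⟩,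
    ⟨fun h => ⟨1, one_pos, h 1 one_pos⟩, fun ⟨l, hl, h⟩ l' hl' => ?_⟩⟩
  · exact hA.maximalMonotoneRel_of_range_add_smul_eq_univ one_pos (h 1 one_pos)
  · exact (hA.maximalMonotoneRel_of_range_add_smul_eq_univ hl h).range_add_smul_eq_univ hl'
end

section
/- Let H be a complex Hilbert space, P ∈ L(H) selfadjoint with P ≥ c for some c > 0, and A ⊆ H ⊕ H a maximal monotone relation. Denote by H_P the Hilbert space H equipped with the weighted inner product ⟨x,y⟩_{H_P} := ⟨Px, y⟩_H. Then the relation AP := {(x,y) ∈ H_P ⊕ H_P : (Px, y) ∈ A} is maximal monotone in H_P. -/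
/-- Monotonicity of a relation with respect to a given sesquilinear form `ip`. -/
def MonotoneRelWRT {H : Type*} [AddCommGroup H] (ip : H → H → ℂ)
    (A : Set (H × H)) : Prop :=
  ∀ p ∈ A, ∀ q ∈ A, 0 ≤ (ip (p.1 - q.1) (p.2 - q.2)).re

def MaximalMonotoneRelWRT {H : Type*} [AddCommGroup H] (ip : H → H → ℂ)
    (A : Set (H × H)) : Prop :=
  MonotoneRelWRT ip A ∧ ∀ B : Set (H × H), MonotoneRelWRT ip B → A ⊆ B → B = A

/-!
A coercive operator `P` is bounded below, so its range is closed, and a vector `y` orthogonal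
to the range satisfies `c ‖y‖² ≤ re ⟪P y, y⟫ = 0`; hence `P` is surjective. Since
`⟪P (x - x'), y - y'⟫ = ⟪P x - P x', y - y'⟫`, the map `(x, y) ↦ (P x, y)` carries relations
monotone for the weighted form to monotone relations and back. A monotone extension `B` of `AP`
is thus mapped onto a monotone relation containing `A` (here surjectivity enters), which must
be `A` by maximality, so `B ⊆ AP`.
-/

open RCLike

section Coercive

variable {𝕜 E : Type*} [RCLike 𝕜] [NormedAddCommGroup E] [InnerProductSpace 𝕜 E]

theorem mul_norm_le_norm_of_coercive {f : E → E} {c : ℝ}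
    (hf : ∀ x, c * ‖x‖ ^ 2 ≤ re (inner 𝕜 (f x) x)) (x : E) : c * ‖x‖ ≤ ‖f x‖ := by
  rcases (norm_nonneg x).eq_or_lt with hx | hx
  · simp [← hx]
  have : c * ‖x‖ * ‖x‖ ≤ ‖f x‖ * ‖x‖ :=
    calc c * ‖x‖ * ‖x‖ = c * ‖x‖ ^ 2 := by ring
      _ ≤ re (inner 𝕜 (f x) x) := hf x
      _ ≤ ‖f x‖ * ‖x‖ := re_inner_le_norm _ _
  exact le_of_mul_le_mul_right this hx

variable [CompleteSpace E]

theorem ContinuousLinearMap.isClosed_range_of_coercive (T : E →L[𝕜] E) {c : ℝ} (hc : 0 < c)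
    (hT : ∀ x, c * ‖x‖ ^ 2 ≤ re (inner 𝕜 (T x) x)) : IsClosed (Set.range T) := by
  have hanti : AntilipschitzWith (Real.toNNReal c⁻¹) T := by
    refine T.antilipschitz_of_bound fun x => ?_
    rw [Real.coe_toNNReal _ (inv_nonneg.mpr hc.le), inv_mul_eq_div, le_div_iff₀ hc, mul_comm]
    exact mul_norm_le_norm_of_coercive hT x
  exact hanti.isClosed_range T.uniformContinuous

theorem ContinuousLinearMap.surjective_of_coercive (T : E →L[𝕜] E) {c : ℝ} (hc : 0 < c)
    (hT : ∀ x, c * ‖x‖ ^ 2 ≤ re (inner 𝕜 (T x) x)) : Function.Surjective T := by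
  have hclosed : IsClosed ((LinearMap.range (T : E →ₗ[𝕜] E)) : Set E) := by
    rw [LinearMap.coe_range]
    exact T.isClosed_range_of_coercive hc hT
  have horth : (LinearMap.range (T : E →ₗ[𝕜] E))ᗮ = ⊥ := by
    refine (Submodule.eq_bot_iff _).mpr fun y hy => ?_
    have hzero : inner 𝕜 (T y) y = 0 :=
      Submodule.inner_right_of_mem_orthogonal (LinearMap.mem_range_self _ y) hy
    have : c * ‖y‖ ^ 2 ≤ 0 := by simpa [hzero] using hT y
    have hsq : ‖y‖ ^ 2 = 0 := le_antisymm (nonpos_of_mul_nonpos_right this hc) (sq_nonneg _)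
    simpa using hsq
  refine LinearMap.range_eq_top.mp ?_
  rw [← hclosed.submodule_topologicalClosure_eq, Submodule.topologicalClosure_eq_top_iff, horth]

end Coercive

section Relations

variable {H F : Type*} [NormedAddCommGroup H] [InnerProductSpace ℂ H]
  [FunLike F H H] [AddMonoidHomClass F H H] {T : F}

theorem MonotoneRel.monotoneRelWRT_preimage {A : Set (H × H)} (hA : MonotoneRel A) :
    MonotoneRelWRT (fun x y => inner ℂ (T x) y) (Prod.map T id ⁻¹' A) := by
  intro p hp q hq
  simpa [map_sub] using hA _ hp _ hq

theorem MonotoneRelWRT.monotoneRel_image {B : Set (H × H)}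
    (hB : MonotoneRelWRT (fun x y => inner ℂ (T x) y) B) : MonotoneRel (Prod.map T id '' B) := by
  rintro _ ⟨p, hp, rfl⟩ _ ⟨q, hq, rfl⟩
  simpa [map_sub] using hB p hp q hq

theorem MaximalMonotoneRel.maximalMonotoneRelWRT_preimage (hT : Function.Surjective T)
    {A : Set (H × H)} (hA : MaximalMonotoneRel A) :
    MaximalMonotoneRelWRT (fun x y => inner ℂ (T x) y) (Prod.map T id ⁻¹' A) := by
  refine ⟨hA.1.monotoneRelWRT_preimage, fun B hB hAB => ?_⟩
  have hA_sub : A ⊆ Prod.map T id '' B := by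
    rintro ⟨u, v⟩ huv
    obtain ⟨x, rfl⟩ := hT u
    exact ⟨(x, v), hAB huv, rfl⟩
  have himage : Prod.map T id '' B = A := hA.2 _ hB.monotoneRel_image hA_sub
  refine hAB.antisymm' fun p hp => ?_
  rw [Set.mem_preimage, ← himage]
  exact Set.mem_image_of_mem _ hp

end Relations

theorem weighted_maximalMonotone_general {H : Type*} [NormedAddCommGroup H]
    [InnerProductSpace ℂ H] [CompleteSpace H]
    (P : H →L[ℂ] H) (c : ℝ) (hc : 0 < c)
    (hPc : ∀ x : H, c * ‖x‖ ^ 2 ≤ (inner ℂ (P x) x : ℂ).re)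
    (A : Set (H × H)) (hA : MaximalMonotoneRel A) :
    MaximalMonotoneRelWRT (fun x y => (inner ℂ (P x) y : ℂ))
      {p : H × H | (P p.1, p.2) ∈ A} :=
  hA.maximalMonotoneRelWRT_preimage (P.surjective_of_coercive hc hPc)

/-- If `P` is a selfadjoint bounded operator with `P ≥ c > 0` and `A` is maximal
monotone, then `AP = {(x,y) : (Px, y) ∈ A}` is maximal monotone with respect to the
weighted inner product `⟨x,y⟩_{H_P} = ⟨Px, y⟩`. -/
theorem weighted_maximalMonotone {H : Type*} [NormedAddCommGroup H]
    [InnerProductSpace ℂ H] [CompleteSpace H]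
    (P : H →L[ℂ] H) (hP : IsSelfAdjoint P) (c : ℝ) (hc : 0 < c)
    (hPc : ∀ x : H, c * ‖x‖ ^ 2 ≤ (inner ℂ (P x) x : ℂ).re)
    (A : Set (H × H)) (hA : MaximalMonotoneRel A) :
    MaximalMonotoneRelWRT (fun x y => (inner ℂ (P x) y : ℂ))
      {p : H × H | (P p.1, p.2) ∈ A} :=
  weighted_maximalMonotone_general P c hc hPc A hA
end

section
/- Let A ⊆ H ⊕ H be a maximal monotone relation, λ > 0, and let x be in the domain of A (i.e. x ∈ [H]A). Let A⁰(x) denote the element of minimal norm of the closed convex set A[{x}] = {y : (x,y) ∈ A}. Then |A_λ(x)| ≤ |A⁰(x)|, where A_λ is the Yosida approximation of A. -/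
/-!
Monotonicity applied to the pairs `(x, y₀)` and `(j, λ⁻¹(x − j))` gives
`λ⁻¹‖x − j‖² ≤ re ⟪x − j, y₀⟫ ≤ ‖x − j‖ ‖y₀‖` by Cauchy–Schwarz, and dividing by `‖x − j‖`
yields `‖λ⁻¹(x − j)‖ ≤ ‖y₀‖`.
-/

open RCLike in
theorem norm_ofReal_smul_le_of_re_inner_sub_nonneg {𝕜 E : Type*} [RCLike 𝕜]
    [NormedAddCommGroup E] [InnerProductSpace 𝕜 E] {c : ℝ} (hc : 0 ≤ c) {u y : E}
    (h : 0 ≤ re (inner 𝕜 u (y - (c : 𝕜) • u))) : ‖(c : 𝕜) • u‖ ≤ ‖y‖ := by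
  have hnorm : ‖(c : 𝕜) • u‖ = c * ‖u‖ := by
    rw [norm_smul, norm_ofReal, abs_of_nonneg hc]
  have hbound : ‖u‖ * (c * ‖u‖) ≤ ‖u‖ * ‖y‖ :=
    calc ‖u‖ * (c * ‖u‖) = re (inner 𝕜 u ((c : 𝕜) • u)) := by
          rw [inner_smul_right, inner_self_eq_norm_sq_to_K, ← ofReal_pow, ← ofReal_mul,
            ofReal_re]
          ring
      _ ≤ re (inner 𝕜 u y) := by
          rw [inner_sub_right, map_sub] at h
          linarith
      _ ≤ ‖u‖ * ‖y‖ := re_inner_le_norm u y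
  rw [hnorm]
  rcases (norm_nonneg u).eq_or_lt with hu | hu
  · rw [← hu, mul_zero]
    exact norm_nonneg y
  · exact le_of_mul_le_mul_left hbound hu

theorem MonotoneRel.norm_inv_smul_sub_le {H : Type*} [NormedAddCommGroup H]
    [InnerProductSpace ℂ H] {A : Set (H × H)} (hA : MonotoneRel A) {l : ℝ} (hl : 0 ≤ l)
    {x j y : H} (hj : (j, (l : ℂ)⁻¹ • (x - j)) ∈ A) (hy : (x, y) ∈ A) :
    ‖(l : ℂ)⁻¹ • (x - j)‖ ≤ ‖y‖ := by
  rw [← Complex.ofReal_inv]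
  apply norm_ofReal_smul_le_of_re_inner_sub_nonneg (inv_nonneg.mpr hl)
  exact_mod_cast hA (x, y) hy _ hj

/-- `j` is the resolvent `(1+λA)⁻¹(x)`, characterized by `(j, λ⁻¹(x − j)) ∈ A`. -/
theorem yosida_le_principal_section_general {H : Type*} [NormedAddCommGroup H]
    [InnerProductSpace ℂ H]
    (A : Set (H × H)) (hA : MaximalMonotoneRel A) (l : ℝ) (hl : 0 < l)
    (x j y₀ : H) (hj : (j, ((l : ℂ))⁻¹ • (x - j)) ∈ A)
    (hy₀ : (x, y₀) ∈ A) :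
    ‖((l : ℂ))⁻¹ • (x - j)‖ ≤ ‖y₀‖ :=
  hA.1.norm_inv_smul_sub_le hl.le hj hy₀

/-- For a maximal monotone relation `A`, `λ > 0` and `x` in the domain of `A`, the
Yosida approximation `A_λ(x) = λ⁻¹(x − (1+λA)⁻¹(x))` satisfies `|A_λ(x)| ≤ |A⁰(x)|`,
where `A⁰(x)` is the minimal-norm element of `A[{x}]`. Here `j` plays the role of the
resolvent `(1+λA)⁻¹(x)`, characterized by `(j, λ⁻¹(x − j)) ∈ A`. -/
theorem yosida_le_principal_section {H : Type*} [NormedAddCommGroup H]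
    [InnerProductSpace ℂ H] [CompleteSpace H]
    (A : Set (H × H)) (hA : MaximalMonotoneRel A) (l : ℝ) (hl : 0 < l)
    (x j y₀ : H) (hj : (j, ((l : ℂ))⁻¹ • (x - j)) ∈ A)
    (hy₀ : (x, y₀) ∈ A) (hmin : ∀ y : H, (x, y) ∈ A → ‖y₀‖ ≤ ‖y‖) :
    ‖((l : ℂ))⁻¹ • (x - j)‖ ≤ ‖y₀‖ :=
  yosida_le_principal_section_general A hA l hl x j y₀ hj hy₀
end

section
/- Let G_c : D(G_c) ⊆ H₀ → H₁ and D_c : D(D_c) ⊆ H₁ → H₀ be densely defined closed linear operators with G_c ⊆ −D_c*, and set G := −D_c*, D := −G_c*. Then the Hilbert space H¹(|G|+i) (the domain D(G) with graph inner product) decomposes orthogonally as H¹(|G|+i) = H¹(|G_c|+i) ⊕ BD(G), where BD(G) := D(G_c)^⊥ (orthogonal complement taken in H¹(|G|+i)), and moreover BD(G) equals the kernel N(1 − DG) = {u ∈ D(G) : Gu ∈ D(D) and DGu = u}. -/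
/-!
The map `x ↦ (x, Gx)` identifies `H¹(|G|+i)` isometrically with a subspace of `H₀ ⊕₂ H₁`
under which `D(G_c)` corresponds to the graph of `G_c`, a closed and hence complete subspace.
The decomposition is therefore the orthogonal projection theorem pulled back along this
injection. For the kernel description, `u ⊥ D(G_c)` says `⟪x, u⟫ + ⟪G_c x, Gu⟫ = 0` for all
`x ∈ D(G_c)`, i.e. `(Gu, -u)` lies in the graph of `G_c*`, which for densely defined `G_c` is
exactly `DGu = u`.
-/

noncomputable section

/-- The graph inner product `⟨x,y⟩ + ⟨Tx,Ty⟩` on the domain of a partially defined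
operator `T` (the inner product of `H¹(|T|+i)`). -/
def gip {E F : Type*} [NormedAddCommGroup E] [InnerProductSpace ℂ E]
    [NormedAddCommGroup F] [InnerProductSpace ℂ F]
    (T : E →ₗ.[ℂ] F) (x y : T.domain) : ℂ :=
  (inner ℂ (x : E) (y : E) : ℂ) + (inner ℂ (T x) (T y) : ℂ)

/-- The boundary data space `BD(T) = D(T_c)^⊥`, the orthogonal complement of the
domain of `T_c` inside the domain of `T` with respect to the graph inner product. -/
def BD {E F : Type*} [NormedAddCommGroup E] [InnerProductSpace ℂ E]
    [NormedAddCommGroup F] [InnerProductSpace ℂ F]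
    (Tc T : E →ₗ.[ℂ] F) : Set T.domain :=
  {u | ∀ v : T.domain, (v : E) ∈ Tc.domain → gip T v u = 0}

/-- The kernel `N(1 - ST) = {u ∈ D(T) : Tu ∈ D(S), S(Tu) = u}`. -/
def NBD {E F : Type*} [NormedAddCommGroup E] [InnerProductSpace ℂ E]
    [NormedAddCommGroup F] [InnerProductSpace ℂ F]
    (T : E →ₗ.[ℂ] F) (S : F →ₗ.[ℂ] E) : Set T.domain :=
  {u | ∃ h : T u ∈ S.domain, S ⟨T u, h⟩ = (u : E)}

end

namespace Submodule

theorem existsUnique_eq_add_of_isCompl {R M : Type*} [Ring R] [AddCommGroup M] [Module R M]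
    {p q : Submodule R M} (hpq : IsCompl p q) (x : M) :
    ∃! r : M × M, r.1 ∈ p ∧ r.2 ∈ q ∧ x = r.1 + r.2 := by
  obtain ⟨a, b, hab, huniq⟩ := existsUnique_add_of_isCompl hpq x
  refine ⟨(a, b), ⟨a.2, b.2, hab.symm⟩, ?_⟩
  rintro ⟨a', b'⟩ ⟨ha', hb', rfl⟩
  obtain ⟨rfl, rfl⟩ := huniq ⟨a', ha'⟩ ⟨b', hb'⟩ rfl
  rfl

theorem isCompl_comap_orthogonal_map {𝕜 V W : Type*} [RCLike 𝕜] [AddCommGroup V] [Module 𝕜 V]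
    [NormedAddCommGroup W] [InnerProductSpace 𝕜 W] {f : V →ₗ[𝕜] W} (hf : Function.Injective f)
    (K : Submodule 𝕜 V) [(K.map f).HasOrthogonalProjection] :
    IsCompl K ((K.map f)ᗮ.comap f) := by
  constructor
  · rw [disjoint_def]
    intro x hxK hxO
    have hfx : f x ∈ K.map f ⊓ (K.map f)ᗮ := ⟨mem_map_of_mem hxK, hxO⟩
    rw [inf_orthogonal_eq_bot, mem_bot] at hfx
    exact hf (hfx.trans (map_zero f).symm)
  · rw [codisjoint_iff, eq_top_iff]
    intro u _
    obtain ⟨a, haK, ha⟩ := mem_map.1 ((K.map f).starProjection_apply_mem (f u))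
    have hrest : u - a ∈ (K.map f)ᗮ.comap f := by
      rw [mem_comap, _root_.map_sub, ha]
      exact sub_starProjection_mem_orthogonal (f u)
    simpa using add_mem_sup haK hrest

end Submodule

namespace LinearPMap

section GraphEmbedding

variable {𝕜 E F : Type*} [RCLike 𝕜] [NormedAddCommGroup E] [InnerProductSpace 𝕜 E]
  [NormedAddCommGroup F] [InnerProductSpace 𝕜 F] {S T : E →ₗ.[𝕜] F}

def graphToLp (T : E →ₗ.[𝕜] F) : T.domain →ₗ[𝕜] WithLp 2 (E × F) :=
  (WithLp.linearEquiv 2 𝕜 (E × F)).symm.toLinearMap ∘ₗ T.domain.subtype.prod T.toFun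

theorem graphToLp_injective (T : E →ₗ.[𝕜] F) : Function.Injective T.graphToLp :=
  fun _ _ h => Subtype.ext congr((WithLp.ofLp $h).1)

theorem map_graphToLp_domain (hST : S ≤ T) :
    (S.domain.comap T.domain.subtype).map T.graphToLp =
      S.graph.comap (WithLp.linearEquiv 2 𝕜 (E × F)).toLinearMap := by
  ext w
  constructor
  · rintro ⟨x, hx, rfl⟩
    exact (mem_graph_iff S).2 ⟨⟨x, hx⟩, rfl, hST.2 rfl⟩
  · intro hw
    obtain ⟨y, hy₁, hy₂⟩ := (mem_graph_iff S).1 hw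
    refine ⟨⟨y, hST.1 y.2⟩, y.2, WithLp.ofLp_injective 2 ?_⟩
    exact Prod.ext hy₁ ((hST.2 rfl).symm.trans hy₂)

theorem isClosed_map_graphToLp_domain (hS : S.IsClosed) (hST : S ≤ T) :
    _root_.IsClosed
      ((S.domain.comap T.domain.subtype).map T.graphToLp : Set (WithLp 2 (E × F))) := by
  rw [map_graphToLp_domain hST]
  exact hS.preimage (WithLp.prodContinuousLinearEquiv 2 𝕜 E F).continuous

end GraphEmbedding

variable {E F : Type*} [NormedAddCommGroup E] [InnerProductSpace ℂ E]
  [NormedAddCommGroup F] [InnerProductSpace ℂ F] {S T : E →ₗ.[ℂ] F}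

-- `gip T x y` is by definition `⟪T.graphToLp x, T.graphToLp y⟫`.
theorem BD_eq_comap_orthogonal (S T : E →ₗ.[ℂ] F) :
    BD S T = ((S.domain.comap T.domain.subtype).map T.graphToLp)ᗮ.comap T.graphToLp := by
  ext u
  simp only [BD, SetLike.mem_coe, Submodule.mem_comap,
    Submodule.mem_orthogonal, Submodule.mem_map]
  constructor
  · rintro h _ ⟨v, hv, rfl⟩
    exact h v hv
  · exact fun h v hv => h _ ⟨v, hv, rfl⟩

theorem existsUnique_add_mem_BD [CompleteSpace E] [CompleteSpace F] (hS : S.IsClosed)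
    (hST : S ≤ T) (u : T.domain) :
    ∃! p : T.domain × T.domain, (p.1 : E) ∈ S.domain ∧ p.2 ∈ BD S T ∧ u = p.1 + p.2 := by
  have := (isClosed_map_graphToLp_domain hS hST).completeSpace_coe
  rw [BD_eq_comap_orthogonal]
  exact Submodule.existsUnique_eq_add_of_isCompl
    (Submodule.isCompl_comap_orthogonal_map T.graphToLp_injective
      (S.domain.comap T.domain.subtype)) u

theorem mem_NBD_neg_iff (T : E →ₗ.[ℂ] F) (S : F →ₗ.[ℂ] E) (u : T.domain) :
    u ∈ NBD T (-S) ↔ (T u, -(u : E)) ∈ S.graph := by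
  rw [mem_graph_iff]
  constructor
  · rintro ⟨h, hu⟩
    exact ⟨⟨T u, h⟩, rfl, by rw [← hu, neg_apply, neg_neg]⟩
  · rintro ⟨⟨y, h⟩, rfl, hy⟩
    exact ⟨h, by rw [neg_apply]; exact neg_eq_iff_eq_neg.2 hy⟩

theorem BD_eq_NBD_neg_adjoint [CompleteSpace E] (hS : Dense (S.domain : Set E)) (hST : S ≤ T) :
    BD S T = NBD T (-S.adjoint) := by
  ext u
  rw [mem_NBD_neg_iff, adjoint_graph_eq_graph_adjoint hS, Submodule.mem_adjoint_iff]
  simp only [BD, gip, Set.mem_ofPred_eq, inner_neg_right, sub_neg_eq_add]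
  constructor
  · rintro h a b hab
    obtain ⟨x, rfl, rfl⟩ := (mem_graph_iff S).1 hab
    rw [apply_comp_inclusion hST, add_comm]
    exact h (Submodule.inclusion hST.1 x) x.2
  · intro h v hv
    have := h _ _ (mem_graph S ⟨v, hv⟩)
    rwa [apply_comp_inclusion hST, add_comm] at this

end LinearPMap

theorem bd_decomposition_general {H₀ H₁ : Type*}
    [NormedAddCommGroup H₀] [InnerProductSpace ℂ H₀] [CompleteSpace H₀]
    [NormedAddCommGroup H₁] [InnerProductSpace ℂ H₁] [CompleteSpace H₁]
    (Gc : H₀ →ₗ.[ℂ] H₁) (Dc : H₁ →ₗ.[ℂ] H₀)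
    (hGc_dense : Dense (Gc.domain : Set H₀))
    (hGc_closed : Gc.IsClosed)
    (hle : Gc ≤ -Dc.adjoint)
    (G : H₀ →ₗ.[ℂ] H₁) (D : H₁ →ₗ.[ℂ] H₀)
    (hG : G = -Dc.adjoint) (hD : D = -Gc.adjoint) :
    (∀ u : G.domain, ∃! p : G.domain × G.domain,
       (p.1 : H₀) ∈ Gc.domain ∧ p.2 ∈ BD Gc G ∧ u = p.1 + p.2) ∧
    BD Gc G = NBD G D := by
  have hGc_le : Gc ≤ G := hG ▸ hle
  exact ⟨LinearPMap.existsUnique_add_mem_BD hGc_closed hGc_le,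
    hD ▸ LinearPMap.BD_eq_NBD_neg_adjoint hGc_dense hGc_le⟩

/-- Decomposition `H¹(|G|+i) = H¹(|G_c|+i) ⊕ BD(G)` and the identification
`BD(G) = N(1 - DG)`, for `G := -D_c*`, `D := -G_c*`. -/
theorem bd_decomposition {H₀ H₁ : Type*}
    [NormedAddCommGroup H₀] [InnerProductSpace ℂ H₀] [CompleteSpace H₀]
    [NormedAddCommGroup H₁] [InnerProductSpace ℂ H₁] [CompleteSpace H₁]
    (Gc : H₀ →ₗ.[ℂ] H₁) (Dc : H₁ →ₗ.[ℂ] H₀)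
    (hGc_dense : Dense (Gc.domain : Set H₀)) (hDc_dense : Dense (Dc.domain : Set H₁))
    (hGc_closed : Gc.IsClosed) (hDc_closed : Dc.IsClosed)
    (hle : Gc ≤ -Dc.adjoint)
    (G : H₀ →ₗ.[ℂ] H₁) (D : H₁ →ₗ.[ℂ] H₀)
    (hG : G = -Dc.adjoint) (hD : D = -Gc.adjoint) :
    (∀ u : G.domain, ∃! p : G.domain × G.domain,
       (p.1 : H₀) ∈ Gc.domain ∧ p.2 ∈ BD Gc G ∧ u = p.1 + p.2) ∧
    BD Gc G = NBD G D :=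
  bd_decomposition_general Gc Dc hGc_dense hGc_closed hle G D hG hD
end

section
/- Let H₀, H₁ be Hilbert spaces, G_c ⊆ −D_c* densely defined closed operators, G := −D_c*, D := −G_c*, with boundary data spaces BD(G), BD(D), projections π_{BD(G)}, π_{BD(D)} from H¹(|G|+i) and H¹(|D|+i), and unitary Ď : BD(D) → BD(G). Then for every (u,v) ∈ D(G) × D(D): Re( ⟨Dv, u⟩_{H₀} + ⟨Gu, v⟩_{H₁} ) = Re ⟨π_{BD(G)}u, Ď π_{BD(D)}v⟩_{BD(G)}. -/
/-! `⟨D v, u⟩ + ⟨G u, v⟩` is additive in both arguments, and its real part vanishes as soon as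
one argument lies in the minimal domain: for `x ∈ D(T)` and `y ∈ D(T†)` the two terms of
`⟨-T† y, x⟩ + ⟨T x, y⟩` are `-⟨y, T x⟩` and its conjugate. Expanding along `u = u_c + u_b`,
`v = v_c + v_b` therefore leaves only the boundary term; that `D_c ⊆ D` follows by taking adjoints
in `G_c ⊆ -D_c*`. -/

namespace LinearPMap

open RCLike

variable {𝕜 E F : Type*} [RCLike 𝕜]
  [NormedAddCommGroup E] [InnerProductSpace 𝕜 E] [NormedAddCommGroup F] [InnerProductSpace 𝕜 F]

local notation "⟪" x ", " y "⟫" => inner 𝕜 x y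

theorem le_neg_of_neg_le {f g : E →ₗ.[𝕜] F} (h : -f ≤ g) : f ≤ -g :=
  ⟨h.1, fun x y hxy => by rw [neg_apply, ← h.2 hxy, neg_apply, neg_neg]⟩

section Adjoint

variable [CompleteSpace F] {T : E →ₗ.[𝕜] F} {S : F →ₗ.[𝕜] E}

theorem isFormalAdjoint_neg_of_le_neg_adjoint (hS : Dense (S.domain : Set F)) (h : T ≤ -S†) :
    T.IsFormalAdjoint (-S) := fun x y =>
  calc ⟪T x, y⟫ = ⟪(-S†) ⟨x, h.1 x.2⟩, y⟫ := by rw [h.2 (x := x) (y := ⟨x, h.1 x.2⟩) rfl]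
    _ = ⟪(x : E), (-S) y⟫ := by
      rw [neg_apply, neg_apply, inner_neg_left, inner_neg_right, adjoint_isFormalAdjoint hS]

theorem le_neg_adjoint_of_le_neg_adjoint [CompleteSpace E] (hT : Dense (T.domain : Set E))
    (hS : Dense (S.domain : Set F)) (h : T ≤ -S†) : S ≤ -T† :=
  le_neg_of_neg_le ((isFormalAdjoint_neg_of_le_neg_adjoint hS h).le_adjoint hT)

end Adjoint

def boundaryPairing (G : E →ₗ.[𝕜] F) (D : F →ₗ.[𝕜] E) (u : G.domain) (v : D.domain) : 𝕜 :=
  ⟪D v, (u : E)⟫ + ⟪G u, (v : F)⟫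

variable {G : E →ₗ.[𝕜] F} {D : F →ₗ.[𝕜] E}

theorem boundaryPairing_swap (u : G.domain) (v : D.domain) :
    boundaryPairing G D u v = boundaryPairing D G v u :=
  add_comm _ _

theorem boundaryPairing_add_left (u₁ u₂ : G.domain) (v : D.domain) :
    boundaryPairing G D (u₁ + u₂) v = boundaryPairing G D u₁ v + boundaryPairing G D u₂ v := by
  simp only [boundaryPairing, map_add, Submodule.coe_add, inner_add_left, inner_add_right]
  ring

theorem boundaryPairing_add_right (u : G.domain) (v₁ v₂ : D.domain) :
    boundaryPairing G D u (v₁ + v₂) = boundaryPairing G D u v₁ + boundaryPairing G D u v₂ := by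
  rw [boundaryPairing_swap, boundaryPairing_add_left, boundaryPairing_swap, boundaryPairing_swap v₂]

variable {T : E →ₗ.[𝕜] F} {S : F →ₗ.[𝕜] E}

theorem re_boundaryPairing_neg_adjoint_eq_zero_of_mem_left [CompleteSpace E] (hT : Dense (T.domain : Set E))
    (hle : T ≤ G) (u : G.domain) (hu : (u : E) ∈ T.domain) (v : (-T†).domain) :
    re (boundaryPairing G (-T†) u v) = 0 := by
  have hTu : ⟪T† v, (u : E)⟫ = ⟪(v : F), T ⟨u, hu⟩⟫ := adjoint_isFormalAdjoint hT v ⟨u, hu⟩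
  rw [boundaryPairing, ← hle.2 (x := ⟨u, hu⟩) rfl, neg_apply, inner_neg_left, hTu,
    _root_.map_add, _root_.map_neg, inner_re_symm, neg_add_cancel]

theorem re_boundaryPairing_neg_adjoint_eq_zero_of_mem_right [CompleteSpace F]
    (hS : Dense (S.domain : Set F)) (hle : S ≤ D) (u : (-S†).domain) (v : D.domain) (hv : (v : F) ∈ S.domain) :
    re (boundaryPairing (-S†) D u v) = 0 := by
  rw [boundaryPairing_swap]
  exact re_boundaryPairing_neg_adjoint_eq_zero_of_mem_left hS hle v hv u

end LinearPMap

open LinearPMap in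
/-- With `u_b = π_{BD(G)} u` and `v_b = π_{BD(D)} v`, the right-hand side is
`Re ⟨π_{BD(G)} u, Ď π_{BD(D)} v⟩_{BD(G)}` written out in the graph inner product of `G`,
using `G (D v_b) = v_b`. -/
theorem bd_inner_product_identity_general {H₀ H₁ : Type*}
    [NormedAddCommGroup H₀] [InnerProductSpace ℂ H₀] [CompleteSpace H₀]
    [NormedAddCommGroup H₁] [InnerProductSpace ℂ H₁] [CompleteSpace H₁]
    (Gc : H₀ →ₗ.[ℂ] H₁) (Dc : H₁ →ₗ.[ℂ] H₀)
    (hGc_dense : Dense (Gc.domain : Set H₀)) (hDc_dense : Dense (Dc.domain : Set H₁))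
    (hle : Gc ≤ -Dc.adjoint)
    (G : H₀ →ₗ.[ℂ] H₁) (D : H₁ →ₗ.[ℂ] H₀)
    (hG : G = -Dc.adjoint) (hD : D = -Gc.adjoint)
    (u uc ub : G.domain) (v vc vb : D.domain)
    (huc : (uc : H₀) ∈ Gc.domain) (hu : u = uc + ub)
    (hvc : (vc : H₁) ∈ Dc.domain) (hv : v = vc + vb) :
    ((inner ℂ (D v) (u : H₀) : ℂ) + (inner ℂ (G u) (v : H₁) : ℂ)).re =
      ((inner ℂ (D vb) (ub : H₀) : ℂ) + (inner ℂ (G ub) (vb : H₁) : ℂ)).re := by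
  subst hG hD hu hv
  have hDc_le : Dc ≤ -Gc† := le_neg_adjoint_of_le_neg_adjoint hGc_dense hDc_dense hle
  change RCLike.re (boundaryPairing (-Dc†) (-Gc†) (uc + ub) (vc + vb)) =
    RCLike.re (boundaryPairing (-Dc†) (-Gc†) ub vb)
  rw [boundaryPairing_add_left, boundaryPairing_add_right ub, _root_.map_add, _root_.map_add,
    re_boundaryPairing_neg_adjoint_eq_zero_of_mem_left hGc_dense hle uc huc,
    re_boundaryPairing_neg_adjoint_eq_zero_of_mem_right hDc_dense hDc_le ub vc hvc, zero_add,
    zero_add]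

/-- The abstract integration-by-parts identity: for `(u,v) ∈ D(G) × D(D)` with graph
orthogonal decompositions `u = u_c + u_b` (`u_c ∈ D(G_c)`, `u_b ∈ BD(G)`) and
`v = v_c + v_b` (`v_c ∈ D(D_c)`, `v_b ∈ BD(D)`),
`Re(⟨Dv,u⟩ + ⟨Gu,v⟩) = Re ⟨π_{BD(G)}u, Ď π_{BD(D)}v⟩_{BD(G)}
 = Re(⟨D v_b, u_b⟩ + ⟨G u_b, v_b⟩)`. -/
theorem bd_inner_product_identity {H₀ H₁ : Type*}
    [NormedAddCommGroup H₀] [InnerProductSpace ℂ H₀] [CompleteSpace H₀]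
    [NormedAddCommGroup H₁] [InnerProductSpace ℂ H₁] [CompleteSpace H₁]
    (Gc : H₀ →ₗ.[ℂ] H₁) (Dc : H₁ →ₗ.[ℂ] H₀)
    (hGc_dense : Dense (Gc.domain : Set H₀)) (hDc_dense : Dense (Dc.domain : Set H₁))
    (hGc_closed : Gc.IsClosed) (hDc_closed : Dc.IsClosed)
    (hle : Gc ≤ -Dc.adjoint)
    (G : H₀ →ₗ.[ℂ] H₁) (D : H₁ →ₗ.[ℂ] H₀)
    (hG : G = -Dc.adjoint) (hD : D = -Gc.adjoint)
    (u uc ub : G.domain) (v vc vb : D.domain)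
    (huc : (uc : H₀) ∈ Gc.domain) (hub : ub ∈ BD Gc G) (hu : u = uc + ub)
    (hvc : (vc : H₁) ∈ Dc.domain) (hvb : vb ∈ BD Dc D) (hv : v = vc + vb) :
    ((inner ℂ (D v) (u : H₀) : ℂ) + (inner ℂ (G u) (v : H₁) : ℂ)).re =
      ((inner ℂ (D vb) (ub : H₀) : ℂ) + (inner ℂ (G ub) (vb : H₁) : ℂ)).re :=
  bd_inner_product_identity_general Gc Dc hGc_dense hDc_dense hle G D hG hD u uc ub v vc vb huc hu
    hvc hv
end

section
/- In the setting of two densely defined closed operators G_c ⊆ −D_c* with G := −D_c*, D := −G_c*, let A be a (possibly nonlinear) restriction of the block operator (u,v) ↦ (Dv, Gu) on H₀ ⊕ H₁. If the domain of A equals {(u,v) ∈ D(G) × D(D) : (π_{BD(G)}u, Ď π_{BD(D)}v) ∈ h} for some maximal monotone relation h ⊆ BD(G) ⊕ BD(G), then A is maximal monotone on H₀ ⊕ H₁. -/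
noncomputable section

/-- The inner product of the Hilbert space direct sum `H₀ ⊕ H₁`. -/
def ipProd {H₀ H₁ : Type*} [NormedAddCommGroup H₀] [InnerProductSpace ℂ H₀]
    [NormedAddCommGroup H₁] [InnerProductSpace ℂ H₁]
    (p q : H₀ × H₁) : ℂ :=
  (inner ℂ p.1 q.1 : ℂ) + (inner ℂ p.2 q.2 : ℂ)

/-- The block operator matrix `(u,v) ↦ (Dv, Gu)` as a relation on `H₀ ⊕ H₁`. -/
def blockRel {H₀ H₁ : Type*} [NormedAddCommGroup H₀] [InnerProductSpace ℂ H₀]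
    [NormedAddCommGroup H₁] [InnerProductSpace ℂ H₁]
    (G : H₀ →ₗ.[ℂ] H₁) (D : H₁ →ₗ.[ℂ] H₀) :
    Set ((H₀ × H₁) × (H₀ × H₁)) :=
  {p | ∃ (hu : p.1.1 ∈ G.domain) (hv : p.1.2 ∈ D.domain),
        p.2.1 = D ⟨p.1.2, hv⟩ ∧ p.2.2 = G ⟨p.1.1, hu⟩}

/-- `h` is a maximal monotone relation on the boundary data space `BDset ⊆ D(G)`
with respect to the graph inner product. -/
def MaxMonBD {H₀ H₁ : Type*} [NormedAddCommGroup H₀] [InnerProductSpace ℂ H₀]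
    [NormedAddCommGroup H₁] [InnerProductSpace ℂ H₁]
    (G : H₀ →ₗ.[ℂ] H₁) (BDset : Set G.domain)
    (h : Set (G.domain × G.domain)) : Prop :=
  h ⊆ BDset ×ˢ BDset ∧ MonotoneRelWRT (gip G) h ∧
    ∀ h' : Set (G.domain × G.domain), h' ⊆ BDset ×ˢ BDset →
      MonotoneRelWRT (gip G) h' → h ⊆ h' → h' = h

/-- The boundary condition `(π_{BD(G)} u, Ď π_{BD(D)} v) ∈ h` for a pair
`p = (u,v) ∈ D(G) × D(D)`, expressed via graph-orthogonal decompositions. -/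
def DomCond {H₀ H₁ : Type*} [NormedAddCommGroup H₀] [InnerProductSpace ℂ H₀]
    [NormedAddCommGroup H₁] [InnerProductSpace ℂ H₁]
    (Gc G : H₀ →ₗ.[ℂ] H₁) (Dc D : H₁ →ₗ.[ℂ] H₀)
    (h : Set (G.domain × G.domain)) (p : H₀ × H₁) : Prop :=
  ∃ (hu : p.1 ∈ G.domain) (hv : p.2 ∈ D.domain) (uc ub : G.domain)
    (vc vb : D.domain) (w : G.domain),
    (uc : H₀) ∈ Gc.domain ∧ ub ∈ BD Gc G ∧ (⟨p.1, hu⟩ : G.domain) = uc + ub ∧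
    (vc : H₁) ∈ Dc.domain ∧ vb ∈ BD Dc D ∧ (⟨p.2, hv⟩ : D.domain) = vc + vb ∧
    (w : H₀) = D vb ∧ (ub, w) ∈ h

end

/-!
Put `β(u, v) = ⟪u, D v⟫ + ⟪G u, v⟫` for `u ∈ D(G)`, `v ∈ D(D)`; then
`Re ⟪(u, v), (D v, G u)⟫_{H₀ ⊕ H₁} = Re β(u, v)`. As `G = -D_c*` and `D = -G_c*`, `β(u, v)`
vanishes when `u ∈ D(G_c)` or `v ∈ D(D_c)`, so by the graph-orthogonal splittings
`D(G) = D(G_c) ⊕ BD(G)`, `D(D) = D(D_c) ⊕ BD(D)` it only sees boundary data: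
`β(u, v) = gip G (π_{BD(G)} u) (Ď π_{BD(D)} v)`. Hence `A` is monotone because `h` is.

For maximality let `(x, y)` be monotonically related to `A` and fix `(a, b) ∈ h`. Every point
`((a, G b), (b, G a)) + z • ((u_c, v_c), (D v_c, G u_c))` with `z ∈ ℂ`, `u_c ∈ D(G_c)`,
`v_c ∈ D(D_c)` lies in `A`; monotonicity along these complex lines gives exactly the adjoint
relations saying that `(x, y)` is in the graph of the block operator. Its boundary data is then
monotonically related to `h`, so it lies in `h` by maximality, that is `(x, y) ∈ A`.
-/

open ComplexConjugate

local notation "⟪" x ", " y "⟫" => @inner ℂ _ _ x y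

section SkewAdjointPairs

variable {E F : Type*} [NormedAddCommGroup E] [InnerProductSpace ℂ E]
  [NormedAddCommGroup F] [InnerProductSpace ℂ F]

theorem Complex.eq_zero_of_forall_re_mul_le {γ : ℂ} {C : ℝ} (h : ∀ z : ℂ, (z * γ).re ≤ C) :
    γ = 0 := by
  by_contra hγ
  have hn : 0 < Complex.normSq γ := Complex.normSq_pos.mpr hγ
  have := h (((C + 1) / Complex.normSq γ : ℝ) * conj γ)
  rw [mul_assoc, ← Complex.normSq_eq_conj_mul_self, ← Complex.ofReal_mul, Complex.ofReal_re,
    div_mul_cancel₀ _ hn.ne'] at this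
  linarith

theorem ipProd_add_ipProd_eq_zero_of_forall_re_nonneg {P Q e f : E × F}
    (hef : (ipProd e f).re = 0) (h : ∀ z : ℂ, 0 ≤ (ipProd (P - z • e) (Q - z • f)).re) :
    ipProd Q e + ipProd P f = 0 := by
  refine Complex.eq_zero_of_forall_re_mul_le (C := (ipProd P Q).re) fun z => ?_
  have hexp : ipProd (P - z • e) (Q - z • f)
      = ipProd P Q - conj (z * ipProd Q e) - z * ipProd P f + conj z * z * ipProd e f := by
    simp only [ipProd, Prod.fst_sub, Prod.snd_sub, Prod.smul_fst, Prod.smul_snd, inner_sub_left,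
      inner_sub_right, inner_smul_left, inner_smul_right, map_mul, _root_.map_add, inner_conj_symm]
    ring
  have := h z
  rw [hexp, Complex.add_re, ← Complex.normSq_eq_conj_mul_self, Complex.re_ofReal_mul, hef,
    mul_zero, add_zero, Complex.sub_re, Complex.sub_re, Complex.conj_re] at this
  rw [mul_add, Complex.add_re]
  linarith

namespace LinearPMap

variable [CompleteSpace E] {T : E →ₗ.[ℂ] F}

theorem inner_neg_adjoint_apply (hT : Dense (T.domain : Set E)) (y : (-T.adjoint).domain)
    (x : T.domain) : ⟪(-T.adjoint) y, x⟫ = -⟪(y : F), T x⟫ := by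
  rw [neg_apply, inner_neg_left]
  exact congrArg Neg.neg (adjoint_isFormalAdjoint hT y x)

theorem mem_graph_neg_adjoint_iff (hT : Dense (T.domain : Set E)) {y : F} {w : E} :
    (y, w) ∈ (-T.adjoint).graph ↔ ∀ x : T.domain, ⟪w, x⟫ = -⟪y, T x⟫ := by
  constructor
  · rintro hyw x
    obtain ⟨y', rfl, rfl⟩ := (-T.adjoint).mem_graph_iff.mp hyw
    exact inner_neg_adjoint_apply hT y' x
  · intro h
    have h' : ∀ x : T.domain, ⟪-w, x⟫ = ⟪y, T x⟫ := fun x => by rw [inner_neg_left, h, neg_neg]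
    have hy : y ∈ T.adjoint.domain := mem_adjoint_domain_of_exists y ⟨-w, h'⟩
    refine (-T.adjoint).mem_graph_iff.mpr ⟨⟨y, hy⟩, rfl, ?_⟩
    rw [neg_apply, adjoint_apply_eq hT ⟨y, hy⟩ h', neg_neg]

end LinearPMap

structure IsSkewAdjointPair [CompleteSpace E] [CompleteSpace F]
    (Gc G : E →ₗ.[ℂ] F) (Dc D : F →ₗ.[ℂ] E) : Prop where
  dense_left : Dense (Gc.domain : Set E)
  dense_right : Dense (Dc.domain : Set F)
  le_left : Gc ≤ G
  le_right : Dc ≤ D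
  eq_left : G = -Dc.adjoint
  eq_right : D = -Gc.adjoint

namespace IsSkewAdjointPair

variable [CompleteSpace E] [CompleteSpace F] {Gc G : E →ₗ.[ℂ] F} {Dc D : F →ₗ.[ℂ] E}

theorem symm (P : IsSkewAdjointPair Gc G Dc D) : IsSkewAdjointPair Dc D Gc G :=
  ⟨P.dense_right, P.dense_left, P.le_right, P.le_left, P.eq_right, P.eq_left⟩

theorem of_le_neg_adjoint (hGc : Dense (Gc.domain : Set E)) (hDc : Dense (Dc.domain : Set F))
    (hle : Gc ≤ -Dc.adjoint) (hG : G = -Dc.adjoint) (hD : D = -Gc.adjoint) :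
    IsSkewAdjointPair Gc G Dc D := by
  refine ⟨hGc, hDc, hG ▸ hle, LinearPMap.le_of_le_graph fun ⟨_, _⟩ hp => ?_, hG, hD⟩
  obtain ⟨y, rfl, rfl⟩ := Dc.mem_graph_iff.mp hp
  rw [hD, LinearPMap.mem_graph_neg_adjoint_iff hGc]
  intro x
  have hx : Gc x = (-Dc.adjoint) ⟨x, hle.1 x.2⟩ := hle.2 rfl
  rw [← inner_conj_symm, ← inner_conj_symm (y : F), hx, LinearPMap.inner_neg_adjoint_apply hDc,
    _root_.map_neg, neg_neg]

variable (P : IsSkewAdjointPair Gc G Dc D)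
include P

theorem apply_eq_of_mem {x : G.domain} (hx : (x : E) ∈ Gc.domain) : Gc ⟨x, hx⟩ = G x :=
  P.le_left.2 rfl

theorem mem_graph_iff {u : E} {g : F} :
    (u, g) ∈ G.graph ↔ ∀ y : D.domain, (y : F) ∈ Dc.domain → ⟪g, y⟫ = -⟪u, D y⟫ := by
  rw [P.eq_left, LinearPMap.mem_graph_neg_adjoint_iff P.dense_right]
  refine ⟨fun h y hy => ?_, fun h y => ?_⟩
  · rw [← P.symm.apply_eq_of_mem hy]
    exact h ⟨y, hy⟩
  · have hy := h ⟨y, P.le_right.1 y.2⟩ y.2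
    rwa [← P.symm.apply_eq_of_mem y.2] at hy

theorem inner_apply_eq_neg (u : G.domain) (y : D.domain) (hy : (y : F) ∈ Dc.domain) :
    ⟪G u, y⟫ = -⟪(u : E), D y⟫ :=
  P.mem_graph_iff.mp (G.mem_graph u) y hy

theorem inner_add_inner_eq_zero_of_mem_right (u : G.domain) (v : D.domain)
    (hv : (v : F) ∈ Dc.domain) : ⟪(u : E), D v⟫ + ⟪G u, v⟫ = 0 := by
  rw [P.inner_apply_eq_neg u v hv, add_neg_cancel]

theorem inner_add_inner_eq_zero_of_mem_left (u : G.domain) (v : D.domain)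
    (hu : (u : E) ∈ Gc.domain) : ⟪(u : E), D v⟫ + ⟪G u, v⟫ = 0 := by
  rw [← inner_conj_symm, ← inner_conj_symm (G u), ← _root_.map_add, add_comm,
    P.symm.inner_add_inner_eq_zero_of_mem_right v u hu, _root_.map_zero]

theorem exists_mem_BD_apply_eq {b : G.domain} (hb : b ∈ BD Gc G) :
    ∃ b' : D.domain, (b' : F) = G b ∧ D b' = b ∧ b' ∈ BD Dc D := by
  have hgraph : (G b, (b : E)) ∈ D.graph := by
    refine P.symm.mem_graph_iff.mpr fun x hx => ?_
    have h0 : ⟪(x : E), b⟫ + ⟪G x, G b⟫ = 0 := hb x hx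
    rw [eq_neg_iff_add_eq_zero, ← inner_conj_symm, ← inner_conj_symm (G b), ← _root_.map_add, h0,
      _root_.map_zero]
  obtain ⟨b', hb', hDb'⟩ := D.mem_graph_iff.mp hgraph
  dsimp only at hb' hDb'
  refine ⟨b', hb', hDb', fun y hy => ?_⟩
  rw [gip, hDb', hb', ← inner_conj_symm, P.inner_apply_eq_neg b y hy, _root_.map_neg,
    inner_conj_symm, neg_add_cancel]

theorem inner_add_inner_eq_gip {u uc ub w : G.domain} {v vc vb : D.domain}
    (huc : (uc : E) ∈ Gc.domain) (hu : u = uc + ub) (hvc : (vc : F) ∈ Dc.domain)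
    (hv : v = vc + vb) (hvb : vb ∈ BD Dc D) (hw : (w : E) = D vb) :
    ⟪(u : E), D v⟫ + ⟪G u, v⟫ = gip G ub w := by
  obtain ⟨w', hw', hGw', -⟩ := P.symm.exists_mem_BD_apply_eq hvb
  obtain rfl : w = w' := Subtype.ext (hw.trans hw'.symm)
  have hcore : ⟪(u : E), D v⟫ + ⟪G u, v⟫
      = (⟪(uc : E), D v⟫ + ⟪G uc, v⟫) + (⟪(ub : E), D vc⟫ + ⟪G ub, vc⟫)
        + (⟪(ub : E), D vb⟫ + ⟪G ub, vb⟫) := by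
    subst hu hv
    simp only [Submodule.coe_add, LinearPMap.map_add, inner_add_left, inner_add_right]
    ring
  rw [hcore, P.inner_add_inner_eq_zero_of_mem_left uc v huc,
    P.inner_add_inner_eq_zero_of_mem_right ub vc hvc, zero_add, zero_add, gip, hw, hGw']

end IsSkewAdjointPair

theorem zero_mem_BD (Tc T : E →ₗ.[ℂ] F) : (0 : T.domain) ∈ BD Tc T := fun v _ => by
  simp [gip]

theorem sub_mem_BD {Tc T : E →ₗ.[ℂ] F} {x y : T.domain} (hx : x ∈ BD Tc T) (hy : y ∈ BD Tc T) :
    x - y ∈ BD Tc T := fun v hv => by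
  have hxv : gip T v x = 0 := hx v hv
  have hyv : gip T v y = 0 := hy v hv
  simp only [gip, Submodule.coe_sub, LinearPMap.map_sub, inner_sub_right] at hxv hyv ⊢
  linear_combination hxv - hyv

theorem exists_add_mem_BD [CompleteSpace E] [CompleteSpace F] {Tc T : E →ₗ.[ℂ] F}
    (hTc : Tc.IsClosed) (hle : Tc ≤ T) (u : T.domain) :
    ∃ uc ub : T.domain, (uc : E) ∈ Tc.domain ∧ ub ∈ BD Tc T ∧ u = uc + ub := by
  let e := WithLp.prodContinuousLinearEquiv 2 ℂ E F
  let K : Submodule ℂ (WithLp 2 (E × F)) := Tc.graph.comap (e : WithLp 2 (E × F) →ₗ[ℂ] E × F)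
  have : CompleteSpace K := (hTc.preimage e.continuous).completeSpace_coe
  -- `⟪Φ x, Φ y⟫ = gip T x y` holds definitionally; this closes the last step.
  let Φ : T.domain →ₗ[ℂ] WithLp 2 (E × F) := e.symm.toLinearMap ∘ₗ T.domain.subtype.prod T.toFun
  have hΦK (x : T.domain) (hx : (x : E) ∈ Tc.domain) : Φ x ∈ K :=
    Tc.mem_graph_iff.mpr ⟨⟨x, hx⟩, rfl, hle.2 rfl⟩
  obtain ⟨k, hk, z, hz, hkz⟩ := K.exists_add_mem_mem_orthogonal (Φ u)
  obtain ⟨yc, hyc₁, hyc₂⟩ := Tc.mem_graph_iff.mp hk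
  let uc : T.domain := ⟨yc, hle.1 yc.2⟩
  have hΦuc : Φ uc = k :=
    e.symm_apply_eq.mpr (Prod.ext hyc₁ ((hle.2 rfl).symm.trans hyc₂))
  refine ⟨uc, u - uc, yc.2, fun v hv => ?_, (add_sub_cancel uc u).symm⟩
  have hz' : Φ (u - uc) = z := by rw [map_sub, hkz, hΦuc, add_sub_cancel_left]
  have := Submodule.inner_right_of_mem_orthogonal (hΦK v hv) hz
  rwa [← hz'] at this

theorem MaxMonBD.mem_of_forall {G : E →ₗ.[ℂ] F} {S : Set G.domain} {h : Set (G.domain × G.domain)}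
    (hh : MaxMonBD G S h) {x y : G.domain} (hx : x ∈ S) (hy : y ∈ S)
    (hxy : ∀ p ∈ h, 0 ≤ (gip G (x - p.1) (y - p.2)).re) : (x, y) ∈ h := by
  have hmono : MonotoneRelWRT (gip G) (insert (x, y) h) := by
    rintro p (rfl | hp) q (rfl | hq)
    · simp [gip]
    · exact hxy q hq
    · have hswap : gip G (p.1 - x) (p.2 - y) = gip G (x - p.1) (y - p.2) := by
        simp only [gip, ← neg_sub x, ← neg_sub y, Submodule.coe_neg, LinearPMap.map_neg,
          inner_neg_neg]
      exact hswap ▸ hxy p hp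
    · exact hh.2.1 p hp q hq
  rw [← hh.2.2 _ (Set.insert_subset ⟨hx, hy⟩ hh.1) hmono (Set.subset_insert _ _)]
  exact Set.mem_insert _ _

theorem MaxMonBD.nonempty {G : E →ₗ.[ℂ] F} {S : Set G.domain} {h : Set (G.domain × G.domain)}
    (hh : MaxMonBD G S h) (h0 : 0 ∈ S) : h.Nonempty := by
  by_contra hne
  exact hne ⟨_, hh.mem_of_forall h0 h0 fun p hp => absurd ⟨p, hp⟩ hne⟩

def blockPair (G : E →ₗ.[ℂ] F) (D : F →ₗ.[ℂ] E) (u : G.domain) (v : D.domain) :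
    (E × F) × (E × F) :=
  (((u : E), (v : F)), (D v, G u))

theorem blockPair_sub {G : E →ₗ.[ℂ] F} {D : F →ₗ.[ℂ] E} (u u' : G.domain) (v v' : D.domain) :
    blockPair G D u v - blockPair G D u' v' = blockPair G D (u - u') (v - v') := by
  simp [blockPair, LinearPMap.map_sub]

theorem blockPair_smul_add {G : E →ₗ.[ℂ] F} {D : F →ₗ.[ℂ] E} (z : ℂ) (u a : G.domain)
    (v b : D.domain) :
    blockPair G D (z • u + a) (z • v + b) = z • blockPair G D u v + blockPair G D a b := by
  simp [blockPair, LinearPMap.map_add, LinearPMap.map_smul]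

theorem exists_blockPair_eq_of_mem_blockRel {G : E →ₗ.[ℂ] F} {D : F →ₗ.[ℂ] E}
    {p : (E × F) × (E × F)} (hp : p ∈ blockRel G D) : ∃ u v, blockPair G D u v = p := by
  obtain ⟨hu, hv, h₁, h₂⟩ := hp
  exact ⟨⟨_, hu⟩, ⟨_, hv⟩, Prod.ext (Prod.ext rfl rfl) (Prod.ext h₁.symm h₂.symm)⟩

theorem re_ipProd_blockPair (G : E →ₗ.[ℂ] F) (D : F →ₗ.[ℂ] E) (u : G.domain) (v : D.domain) :
    (ipProd (blockPair G D u v).1 (blockPair G D u v).2).re = (⟪(u : E), D v⟫ + ⟪G u, v⟫).re := by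
  simp only [ipProd, blockPair, Complex.add_re]
  rw [← inner_conj_symm (v : F), Complex.conj_re]

section RestrictionOfBlockOperator

variable {Gc G : E →ₗ.[ℂ] F} {Dc D : F →ₗ.[ℂ] E} {A : Set ((E × F) × (E × F))}
  {h : Set (G.domain × G.domain)}

theorem blockPair_mem_iff (hA : A ⊆ blockRel G D)
    (hdom : ∀ p : E × F, (∃ q, (p, q) ∈ A) ↔ DomCond Gc G Dc D h p) (u : G.domain) (v : D.domain) :
    blockPair G D u v ∈ A ↔ ∃ (uc ub : G.domain) (vc vb : D.domain) (w : G.domain),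
      (uc : E) ∈ Gc.domain ∧ ub ∈ BD Gc G ∧ u = uc + ub ∧
      (vc : F) ∈ Dc.domain ∧ vb ∈ BD Dc D ∧ v = vc + vb ∧ (w : E) = D vb ∧ (ub, w) ∈ h := by
  refine ⟨fun hmem => ?_, fun hdec => ?_⟩
  · obtain ⟨_, _, hdec⟩ := (hdom _).mp ⟨_, hmem⟩
    exact hdec
  · obtain ⟨q, hq⟩ := (hdom ((u : E), (v : F))).mpr ⟨u.2, v.2, hdec⟩
    obtain ⟨_, _, h₁, h₂⟩ := hA hq
    obtain rfl : q = (D v, G u) := Prod.ext h₁ h₂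
    exact hq

variable [CompleteSpace E] [CompleteSpace F]

theorem monotoneRelWRT_ipProd (P : IsSkewAdjointPair Gc G Dc D) (hA : A ⊆ blockRel G D)
    (hmono : MonotoneRelWRT (gip G) h)
    (hdom : ∀ p : E × F, (∃ q, (p, q) ∈ A) ↔ DomCond Gc G Dc D h p) :
    MonotoneRelWRT ipProd A := by
  rintro p₁ hp₁ p₂ hp₂
  obtain ⟨u₁, v₁, rfl⟩ := exists_blockPair_eq_of_mem_blockRel (hA hp₁)
  obtain ⟨u₂, v₂, rfl⟩ := exists_blockPair_eq_of_mem_blockRel (hA hp₂)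
  obtain ⟨uc₁, ub₁, vc₁, vb₁, w₁, huc₁, -, rfl, hvc₁, hvb₁, rfl, hw₁, hh₁⟩ :=
    (blockPair_mem_iff hA hdom _ _).mp hp₁
  obtain ⟨uc₂, ub₂, vc₂, vb₂, w₂, huc₂, -, rfl, hvc₂, hvb₂, rfl, hw₂, hh₂⟩ :=
    (blockPair_mem_iff hA hdom _ _).mp hp₂
  have hboundary := P.inner_add_inner_eq_gip (ub := ub₁ - ub₂) (w := w₁ - w₂)
    (Gc.domain.sub_mem huc₁ huc₂) (add_sub_add_comm ..) (Dc.domain.sub_mem hvc₁ hvc₂)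
    (add_sub_add_comm ..) (sub_mem_BD hvb₁ hvb₂)
    (by rw [Submodule.coe_sub, LinearPMap.map_sub, hw₁, hw₂])
  rw [← Prod.fst_sub, ← Prod.snd_sub, blockPair_sub, re_ipProd_blockPair, hboundary]
  exact hmono _ hh₁ _ hh₂

theorem exists_blockPair_eq_of_forall (P : IsSkewAdjointPair Gc G Dc D) (hA : A ⊆ blockRel G D)
    (hh : MaxMonBD G (BD Gc G) h)
    (hdom : ∀ p : E × F, (∃ q, (p, q) ∈ A) ↔ DomCond Gc G Dc D h p) {pq : (E × F) × (E × F)}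
    (hpq : ∀ p ∈ A, 0 ≤ (ipProd (pq.1 - p.1) (pq.2 - p.2)).re) :
    ∃ u v, blockPair G D u v = pq := by
  obtain ⟨⟨a, b⟩, hab⟩ := hh.nonempty (zero_mem_BD Gc G)
  obtain ⟨b', -, hDb', hb'⟩ := P.exists_mem_BD_apply_eq (hh.1 hab).2
  set p₀ := blockPair G D a b'
  -- Testing `pq` against the lines `p₀ + z • blockPair uc vc ⊆ A` forces it into the graph.
  have hline (uc : G.domain) (vc : D.domain) (huc : (uc : E) ∈ Gc.domain)
      (hvc : (vc : F) ∈ Dc.domain) :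
      ipProd (pq.2 - p₀.2) (blockPair G D uc vc).1
        + ipProd (pq.1 - p₀.1) (blockPair G D uc vc).2 = 0 := by
    refine ipProd_add_ipProd_eq_zero_of_forall_re_nonneg ?_ fun z => ?_
    · rw [re_ipProd_blockPair, P.inner_add_inner_eq_zero_of_mem_left uc vc huc, Complex.zero_re]
    · have hmem : blockPair G D (z • uc + a) (z • vc + b') ∈ A :=
        (blockPair_mem_iff hA hdom _ _).mpr ⟨z • uc, a, z • vc, b', b, Gc.domain.smul_mem z huc,
          (hh.1 hab).1, rfl, Dc.domain.smul_mem z hvc, hb', rfl, hDb'.symm, hab⟩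
      have := hpq _ hmem
      rwa [blockPair_smul_add, Prod.fst_add, Prod.snd_add, Prod.smul_fst, Prod.smul_snd,
        sub_add_eq_sub_sub_swap, sub_add_eq_sub_sub_swap] at this
  have hG : (pq.1.1, pq.2.2) ∈ G.graph := by
    have hcore : ((pq.1 - p₀.1).1, (pq.2 - p₀.2).2) ∈ G.graph :=
      P.mem_graph_iff.mpr fun y hy => by
        have := hline 0 y Gc.domain.zero_mem hy
        simp only [blockPair, ipProd, ZeroMemClass.coe_zero, LinearPMap.map_zero, inner_zero_right,
          zero_add, add_zero] at this
        exact eq_neg_of_add_eq_zero_left this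
    simpa [p₀, blockPair] using G.graph.add_mem hcore (G.mem_graph a)
  have hD : (pq.1.2, pq.2.1) ∈ D.graph := by
    have hcore : ((pq.1 - p₀.1).2, (pq.2 - p₀.2).1) ∈ D.graph :=
      P.symm.mem_graph_iff.mpr fun x hx => by
        have := hline x 0 hx Dc.domain.zero_mem
        simp only [blockPair, ipProd, ZeroMemClass.coe_zero, LinearPMap.map_zero, inner_zero_right,
          zero_add, add_zero] at this
        exact eq_neg_of_add_eq_zero_left this
    simpa [p₀, blockPair, hDb'] using D.graph.add_mem hcore (D.mem_graph b')
  obtain ⟨u, hu₁, hu₂⟩ := G.mem_graph_iff.mp hG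
  obtain ⟨v, hv₁, hv₂⟩ := D.mem_graph_iff.mp hD
  exact ⟨u, v, Prod.ext (Prod.ext hu₁ hv₁) (Prod.ext hv₂ hu₂)⟩

theorem blockPair_mem_of_forall (P : IsSkewAdjointPair Gc G Dc D) (hGc : Gc.IsClosed)
    (hDc : Dc.IsClosed) (hA : A ⊆ blockRel G D) (hh : MaxMonBD G (BD Gc G) h)
    (hdom : ∀ p : E × F, (∃ q, (p, q) ∈ A) ↔ DomCond Gc G Dc D h p) (u : G.domain) (v : D.domain)
    (hpq : ∀ p ∈ A,
      0 ≤ (ipProd ((blockPair G D u v).1 - p.1) ((blockPair G D u v).2 - p.2)).re) :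
    blockPair G D u v ∈ A := by
  obtain ⟨uc, ub, huc, hub, rfl⟩ := exists_add_mem_BD hGc P.le_left u
  obtain ⟨vc, vb, hvc, hvb, rfl⟩ := exists_add_mem_BD hDc P.le_right v
  obtain ⟨w, hw, -, hwBD⟩ := P.symm.exists_mem_BD_apply_eq hvb
  refine (blockPair_mem_iff hA hdom _ _).mpr
    ⟨uc, ub, vc, vb, w, huc, hub, rfl, hvc, hvb, rfl, hw, ?_⟩
  refine hh.mem_of_forall hub hwBD fun ⟨a, b⟩ hab => ?_
  obtain ⟨b', -, hDb', hb'⟩ := P.exists_mem_BD_apply_eq (hh.1 hab).2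
  have hmem : blockPair G D a b' ∈ A := (blockPair_mem_iff hA hdom a b').mpr
    ⟨0, a, 0, b', b, Gc.domain.zero_mem, (hh.1 hab).1, (zero_add a).symm, Dc.domain.zero_mem, hb',
      (zero_add b').symm, hDb'.symm, hab⟩
  have hboundary := P.inner_add_inner_eq_gip (ub := ub - a) (w := w - b) huc
    (add_sub_assoc uc ub a) hvc (add_sub_assoc vc vb b') (sub_mem_BD hvb hb')
    (by rw [Submodule.coe_sub, LinearPMap.map_sub, hw, hDb'])
  have := hpq _ hmem
  rwa [← Prod.fst_sub, ← Prod.snd_sub, blockPair_sub, re_ipProd_blockPair, hboundary] at this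

end RestrictionOfBlockOperator

end SkewAdjointPairs

/-- If the domain of a restriction `A` of the block operator `(u,v) ↦ (Dv, Gu)` is
given by a maximal monotone boundary relation `h ⊆ BD(G) ⊕ BD(G)`, then `A` is
maximal monotone on `H₀ ⊕ H₁`. -/
theorem bd_maximalMonotone_of_relation {H₀ H₁ : Type*}
    [NormedAddCommGroup H₀] [InnerProductSpace ℂ H₀] [CompleteSpace H₀]
    [NormedAddCommGroup H₁] [InnerProductSpace ℂ H₁] [CompleteSpace H₁]
    (Gc : H₀ →ₗ.[ℂ] H₁) (Dc : H₁ →ₗ.[ℂ] H₀)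
    (hGc_dense : Dense (Gc.domain : Set H₀)) (hDc_dense : Dense (Dc.domain : Set H₁))
    (hGc_closed : Gc.IsClosed) (hDc_closed : Dc.IsClosed)
    (hle : Gc ≤ -Dc.adjoint)
    (G : H₀ →ₗ.[ℂ] H₁) (D : H₁ →ₗ.[ℂ] H₀)
    (hG : G = -Dc.adjoint) (hD : D = -Gc.adjoint)
    (A : Set ((H₀ × H₁) × (H₀ × H₁))) (hA : A ⊆ blockRel G D)
    (h : Set (G.domain × G.domain)) (hh : MaxMonBD G (BD Gc G) h)
    (hdom : ∀ p : H₀ × H₁, (∃ q, (p, q) ∈ A) ↔ DomCond Gc G Dc D h p) :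
    MaximalMonotoneRelWRT ipProd A := by
  have P := IsSkewAdjointPair.of_le_neg_adjoint hGc_dense hDc_dense hle hG hD
  refine ⟨monotoneRelWRT_ipProd P hA hh.2.1 hdom, fun B hB hAB => subset_antisymm ?_ hAB⟩
  intro pq hpq
  have hmono (p) (hp : p ∈ A) : 0 ≤ (ipProd (pq.1 - p.1) (pq.2 - p.2)).re :=
    hB pq hpq p (hAB hp)
  obtain ⟨u, v, rfl⟩ := exists_blockPair_eq_of_forall P hA hh hdom hmono
  exact blockPair_mem_of_forall P hGc_closed hDc_closed hA hh hdom u v hmono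
end

section
/- In the setting of two densely defined closed operators G_c ⊆ −D_c* with G := −D_c*, D := −G_c*, suppose A is a maximal monotone restriction of the block operator (u,v) ↦ (Dv, Gu) on H₀ ⊕ H₁. Then there exists a maximal monotone relation h ⊆ BD(G) ⊕ BD(G) such that D(A) = {(u,v) ∈ D(G) × D(D) : (π_{BD(G)}u, Ď π_{BD(D)}v) ∈ h}. -/
/-! For `u ∈ D(G)` and `v ∈ D(D)` the form `⟨u, Dv⟩ + ⟨Gu, v⟩` vanishes as soon as `u ∈ D(Gc)`
or `v ∈ D(Dc)`, because `D = -Gc*` and `G = -Dc*`. So it only sees the boundary components and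
equals the graph inner product of `π_{BD(G)} u` and `Ď π_{BD(D)} v`. Hence monotonicity of `A` is
the same condition as monotonicity of the relation `h` formed by the boundary data of `D(A)`, and
maximality passes between them: a pair `(a, b)` in a monotone extension of `h` is the boundary
data of `(a, G b)`, and adding that point to `A` keeps `A` monotone. -/

local notation "⟪" x ", " y "⟫" => @inner ℂ _ _ x y

section DualPair

variable {E F : Type*} [NormedAddCommGroup E] [InnerProductSpace ℂ E]
  [NormedAddCommGroup F] [InnerProductSpace ℂ F]

/-- `a = π_{BD(T)} u`. -/
def IsBDComponent (Tc T : E →ₗ.[ℂ] F) (u a : T.domain) : Prop :=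
  ∃ uc : T.domain, (uc : E) ∈ Tc.domain ∧ a ∈ BD Tc T ∧ u = uc + a

variable {Tc T : E →ₗ.[ℂ] F} {Sc S : F →ₗ.[ℂ] E}

lemma inner_add_inner_eq_zero_of_mem_domain [CompleteSpace E] (hTc : Dense (Tc.domain : Set E))
    (hS : S = -Tc.adjoint) (hle : Tc ≤ T) (u : T.domain) (hu : (u : E) ∈ Tc.domain) (v : S.domain) :
    ⟪(u : E), S v⟫ + ⟪T u, (v : F)⟫ = 0 := by
  subst hS
  rw [← hle.2 (x := ⟨u, hu⟩) rfl, LinearPMap.neg_apply, inner_neg_right,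
    (LinearPMap.adjoint_isFormalAdjoint hTc).symm ⟨u, hu⟩ v, neg_add_cancel]

lemma le_neg_adjoint_of_le_neg_adjoint [CompleteSpace E] [CompleteSpace F]
    (hTc : Dense (Tc.domain : Set E)) (hSc : Dense (Sc.domain : Set F)) (hle : Tc ≤ -Sc.adjoint) :
    Sc ≤ -Tc.adjoint := by
  have key (x : Sc.domain) (y : Tc.domain) : ⟪-Sc x, (y : E)⟫ = ⟪(x : F), Tc y⟫ := by
    have := inner_add_inner_eq_zero_of_mem_domain hSc rfl le_rfl x x.2 ⟨y, hle.1 y.2⟩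
    rw [← hle.2 rfl] at this
    rw [inner_neg_left]
    linear_combination -this
  have hdom (x : Sc.domain) : (x : F) ∈ Tc.adjoint.domain :=
    LinearPMap.mem_adjoint_domain_of_exists _ ⟨_, key x⟩
  refine ⟨fun x hx => hdom ⟨x, hx⟩, fun x y hxy => ?_⟩
  rw [LinearPMap.neg_apply, LinearPMap.adjoint_apply_eq hTc (y := y) (x₀ := -Sc x) fun z => by
    rw [← hxy]; exact key x z, neg_neg]

lemma sub_mem_BD_s13 {a b : T.domain} (ha : a ∈ BD Tc T) (hb : b ∈ BD Tc T) : a - b ∈ BD Tc T := by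
  intro v hv
  have hav := ha v hv
  have hbv := hb v hv
  simp only [gip, LinearPMap.map_sub, Submodule.coe_sub, inner_sub_right] at hav hbv ⊢
  linear_combination hav - hbv

lemma adjoint_apply_of_mem_BD [CompleteSpace E] (hTc : Dense (Tc.domain : Set E)) (hle : Tc ≤ T)
    {a : T.domain} (ha : a ∈ BD Tc T) :
    ∃ h : T a ∈ Tc.adjoint.domain, Tc.adjoint ⟨T a, h⟩ = -(a : E) := by
  have key (x : Tc.domain) : ⟪-(a : E), (x : E)⟫ = ⟪T a, Tc x⟫ := by
    have := ha ⟨x, hle.1 x.2⟩ x.2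
    rw [gip, ← hle.2 rfl] at this
    have hx : ⟪Tc x, T a⟫ = -⟪(x : E), (a : E)⟫ := by linear_combination this
    rw [inner_neg_left, ← inner_conj_symm (T a), hx, map_neg, inner_conj_symm]
  exact ⟨LinearPMap.mem_adjoint_domain_of_exists _ ⟨_, key⟩,
    LinearPMap.adjoint_apply_eq hTc _ key⟩

lemma isBDComponent_self {a : T.domain} (ha : a ∈ BD Tc T) : IsBDComponent Tc T a a :=
  ⟨0, Tc.domain.zero_mem, ha, (zero_add a).symm⟩

lemma IsBDComponent.mem_BD {u a : T.domain} (h : IsBDComponent Tc T u a) : a ∈ BD Tc T :=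
  h.choose_spec.2.1

lemma IsBDComponent.sub {u u' a a' : T.domain} (h : IsBDComponent Tc T u a)
    (h' : IsBDComponent Tc T u' a') :
    IsBDComponent Tc T (u - u') (a - a') := by
  obtain ⟨uc, huc, ha, rfl⟩ := h
  obtain ⟨uc', huc', ha', rfl⟩ := h'
  exact ⟨uc - uc', Tc.domain.sub_mem huc huc', sub_mem_BD_s13 ha ha', by abel⟩

lemma exists_isBDComponent [CompleteSpace E] [CompleteSpace F]
    (hTc : Tc.IsClosed) (hle : Tc ≤ T) (u : T.domain) : ∃ a, IsBDComponent Tc T u a := by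
  -- On graphs the `L²` inner product of `E × F` is `gip`, so `π_{BD(T)} u` is read off the
  -- component of `(u, T u)` orthogonal to the closed graph of `Tc`.
  let e := WithLp.prodContinuousLinearEquiv 2 ℂ E F
  let K : Submodule ℂ (WithLp 2 (E × F)) :=
    Tc.graph.comap (e : WithLp 2 (E × F) →ₗ[ℂ] E × F)
  have : CompleteSpace K := (hTc.preimage e.continuous).completeSpace_coe
  obtain ⟨y, hy, z, hz, hyz⟩ := K.exists_add_mem_mem_orthogonal (WithLp.toLp 2 ((u : E), T u))
  obtain ⟨uc, huc1, huc2⟩ := Tc.mem_graph_iff.mp hy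
  let uc' : T.domain := ⟨uc, hle.1 uc.2⟩
  refine ⟨u - uc', uc', uc.2, fun v hv => ?_, (add_sub_cancel _ _).symm⟩
  have hz' : z = WithLp.toLp 2 (((u - uc' : T.domain) : E), T (u - uc')) := by
    have hy' : y = WithLp.toLp 2 ((uc' : E), T uc') :=
      congrArg (WithLp.toLp 2) (Prod.ext huc1.symm (huc2.symm.trans (hle.2 rfl)))
    rw [eq_sub_of_add_eq' hyz.symm, hy', ← WithLp.toLp_sub, LinearPMap.map_sub]
    rfl
  have hvK : WithLp.toLp 2 ((v : E), T v) ∈ K :=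
    Tc.mem_graph_iff.mpr ⟨⟨v, hv⟩, rfl, hle.2 rfl⟩
  have horth := (K.mem_orthogonal z).mp hz _ hvK
  rwa [hz'] at horth

/-- `(Tc, T, Sc, S) = (G_c, G, D_c, D)`. -/
structure IsDualPair [CompleteSpace E] [CompleteSpace F]
    (Tc T : E →ₗ.[ℂ] F) (Sc S : F →ₗ.[ℂ] E) : Prop where
  dense_left : Dense (Tc.domain : Set E)
  dense_right : Dense (Sc.domain : Set F)
  le_left : Tc ≤ T
  eq_left : T = -Sc.adjoint
  eq_right : S = -Tc.adjoint

namespace IsDualPair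

variable [CompleteSpace E] [CompleteSpace F]

lemma le_right (hP : IsDualPair Tc T Sc S) : Sc ≤ S :=
  hP.eq_right ▸ le_neg_adjoint_of_le_neg_adjoint hP.dense_left hP.dense_right
    (hP.eq_left ▸ hP.le_left)

lemma symm (hP : IsDualPair Tc T Sc S) : IsDualPair Sc S Tc T :=
  ⟨hP.dense_right, hP.dense_left, hP.le_right, hP.eq_right, hP.eq_left⟩

/-- With `(Tc, T) = (Dc, D)` this is `Ď = D|_{BD(D)}`, inverted by `G`. -/
lemma exists_mem_BD_of_mem_BD (hP : IsDualPair Tc T Sc S) {a : T.domain} (ha : a ∈ BD Tc T) :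
    ∃ w : S.domain, (w : F) = T a ∧ S w = a ∧ w ∈ BD Sc S := by
  obtain ⟨hmem, happ⟩ := adjoint_apply_of_mem_BD hP.dense_left hP.le_left ha
  obtain rfl := hP.eq_right
  have hSw : (-Tc.adjoint) ⟨T a, hmem⟩ = a := by rw [LinearPMap.neg_apply, happ, neg_neg]
  refine ⟨⟨T a, hmem⟩, rfl, hSw, fun v hv => ?_⟩
  rw [gip, hSw]
  exact inner_add_inner_eq_zero_of_mem_domain hP.dense_right hP.eq_left hP.le_right v hv a

lemma inner_add_inner_eq_gip (hP : IsDualPair Tc T Sc S) {u a b : T.domain} {v vb : S.domain}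
    (hu : IsBDComponent Tc T u a) (hv : IsBDComponent Sc S v vb) (hb : (b : E) = S vb) :
    ⟪(u : E), S v⟫ + ⟪T u, (v : F)⟫ = gip T a b := by
  obtain ⟨uc, huc, ha, rfl⟩ := hu
  obtain ⟨vc, hvc, hvb, rfl⟩ := hv
  obtain ⟨w, hw, hTw, -⟩ := hP.symm.exists_mem_BD_of_mem_BD hvb
  obtain rfl : b = w := Subtype.ext (hb.trans hw.symm)
  have h₁ := inner_add_inner_eq_zero_of_mem_domain hP.dense_left hP.eq_right hP.le_left uc huc
  have h₂ := inner_add_inner_eq_zero_of_mem_domain hP.dense_right hP.eq_left hP.le_right vc hvc a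
  rw [← inner_conj_symm, ← inner_conj_symm (S vc), ← map_add, map_eq_zero] at h₂
  rw [gip, hTw, hb, LinearPMap.map_add, LinearPMap.map_add]
  simp only [Submodule.coe_add, inner_add_left, inner_add_right]
  linear_combination h₁ vc + h₁ vb + h₂

end IsDualPair

end DualPair

lemma MaximalMonotoneRelWRT.mem_of_monotoneRelWRT_insert {H : Type*} [AddCommGroup H]
    {ip : H → H → ℂ} {A : Set (H × H)} (hA : MaximalMonotoneRelWRT ip A) {x : H × H}
    (hx : MonotoneRelWRT ip (insert x A)) : x ∈ A :=
  hA.2 _ hx (Set.subset_insert x A) ▸ Set.mem_insert x A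

section BlockOperator

variable {H₀ H₁ : Type*} [NormedAddCommGroup H₀] [InnerProductSpace ℂ H₀]
  [NormedAddCommGroup H₁] [InnerProductSpace ℂ H₁]
  {Gc G : H₀ →ₗ.[ℂ] H₁} {Dc D : H₁ →ₗ.[ℂ] H₀} {A : Set ((H₀ × H₁) × (H₀ × H₁))}

variable (Gc G Dc D) in
/-- `(a, b) = (π_{BD(G)} u, Ď π_{BD(D)} v)` for `p = (u, v)`. -/
def IsBoundaryData (p : H₀ × H₁) (a b : G.domain) : Prop :=
  ∃ (hu : p.1 ∈ G.domain) (hv : p.2 ∈ D.domain) (vb : D.domain),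
    IsBDComponent Gc G ⟨p.1, hu⟩ a ∧ IsBDComponent Dc D ⟨p.2, hv⟩ vb ∧ (b : H₀) = D vb

lemma domCond_iff {h : Set (G.domain × G.domain)} {p : H₀ × H₁} :
    DomCond Gc G Dc D h p ↔ ∃ a b, IsBoundaryData Gc G Dc D p a b ∧ (a, b) ∈ h := by
  constructor
  · rintro ⟨hu, hv, uc, a, vc, vb, b, huc, ha, hua, hvc, hvb, hvv, hb, hab⟩
    exact ⟨a, b, ⟨hu, hv, vb, ⟨uc, huc, ha, hua⟩, ⟨vc, hvc, hvb, hvv⟩, hb⟩, hab⟩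
  · rintro ⟨a, b, ⟨hu, hv, vb, ⟨uc, huc, ha, hua⟩, ⟨vc, hvc, hvb, hvv⟩, hb⟩, hab⟩
    exact ⟨hu, hv, uc, a, vc, vb, b, huc, ha, hua, hvc, hvb, hvv, hb, hab⟩

lemma IsBoundaryData.sub {p p' : H₀ × H₁} {a a' b b' : G.domain}
    (h : IsBoundaryData Gc G Dc D p a b) (h' : IsBoundaryData Gc G Dc D p' a' b') :
    IsBoundaryData Gc G Dc D (p - p') (a - a') (b - b') := by
  obtain ⟨hu, hv, vb, ha, hvb, hb⟩ := h
  obtain ⟨hu', hv', vb', ha', hvb', hb'⟩ := h'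
  refine ⟨G.domain.sub_mem hu hu', D.domain.sub_mem hv hv', vb - vb', ha.sub ha', hvb.sub hvb',
    ?_⟩
  rw [LinearPMap.map_sub, ← hb, ← hb']
  rfl

lemma sub_mem_blockRel {p p' q q' : H₀ × H₁} (h : (p, q) ∈ blockRel G D)
    (h' : (p', q') ∈ blockRel G D) : (p - p', q - q') ∈ blockRel G D := by
  obtain ⟨hu, hv, hq₁, hq₂⟩ := h
  obtain ⟨hu', hv', hq₁', hq₂'⟩ := h'
  refine ⟨G.domain.sub_mem hu hu', D.domain.sub_mem hv hv', ?_, ?_⟩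
  · exact (congrArg₂ (· - ·) hq₁ hq₁').trans (D.map_sub ⟨p.2, hv⟩ ⟨p'.2, hv'⟩).symm
  · exact (congrArg₂ (· - ·) hq₂ hq₂').trans (G.map_sub ⟨p.1, hu⟩ ⟨p'.1, hu'⟩).symm

lemma IsBoundaryData.exists_mem_blockRel {p : H₀ × H₁} {a b : G.domain}
    (hab : IsBoundaryData Gc G Dc D p a b) : ∃ q, (p, q) ∈ blockRel G D :=
  ⟨(D ⟨p.2, hab.2.1⟩, G ⟨p.1, hab.1⟩), hab.1, hab.2.1, rfl, rfl⟩

variable (Gc G Dc D A) in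
def boundaryRel : Set (G.domain × G.domain) :=
  {ab | ∃ p, (∃ q, (p, q) ∈ A) ∧ IsBoundaryData Gc G Dc D p ab.1 ab.2}

variable [CompleteSpace H₀] [CompleteSpace H₁]

lemma IsDualPair.re_ipProd_eq_re_gip (hP : IsDualPair Gc G Dc D) {p q : H₀ × H₁}
    {a b : G.domain} (hpq : (p, q) ∈ blockRel G D) (hab : IsBoundaryData Gc G Dc D p a b) :
    (ipProd p q).re = (gip G a b).re := by
  obtain ⟨hu, hv, hq₁, hq₂⟩ := hpq
  obtain ⟨_, _, vb, ha, hvb, hb⟩ := hab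
  rw [← hP.inner_add_inner_eq_gip ha hvb hb, ipProd, hq₁, hq₂, Complex.add_re, Complex.add_re,
    ← inner_conj_symm p.2, Complex.conj_re]

lemma IsDualPair.re_ipProd_sub_eq_re_gip_sub (hP : IsDualPair Gc G Dc D)
    {p p' q q' : H₀ × H₁} {a a' b b' : G.domain} (hpq : (p, q) ∈ blockRel G D)
    (hpq' : (p', q') ∈ blockRel G D) (hab : IsBoundaryData Gc G Dc D p a b)
    (hab' : IsBoundaryData Gc G Dc D p' a' b') :
    (ipProd (p - p') (q - q')).re = (gip G (a - a') (b - b')).re :=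
  hP.re_ipProd_eq_re_gip (sub_mem_blockRel hpq hpq') (hab.sub hab')

lemma IsDualPair.monotoneRelWRT_of_isBoundaryData (hP : IsDualPair Gc G Dc D)
    {h : Set (G.domain × G.domain)} (hh : MonotoneRelWRT (gip G) h)
    {B : Set ((H₀ × H₁) × (H₀ × H₁))} (hB : B ⊆ blockRel G D)
    (hBh : ∀ r ∈ B, ∃ a b, IsBoundaryData Gc G Dc D r.1 a b ∧ (a, b) ∈ h) :
    MonotoneRelWRT ipProd B := by
  intro r hr s hs
  obtain ⟨a, b, hab, habh⟩ := hBh r hr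
  obtain ⟨a', b', hab', habh'⟩ := hBh s hs
  rw [hP.re_ipProd_sub_eq_re_gip_sub (hB hr) (hB hs) hab hab']
  exact hh _ habh _ habh'

lemma IsDualPair.exists_isBoundaryData (hP : IsDualPair Gc G Dc D) (hGc : Gc.IsClosed)
    (hDc : Dc.IsClosed) {p : H₀ × H₁} (hu : p.1 ∈ G.domain) (hv : p.2 ∈ D.domain) :
    ∃ a b, IsBoundaryData Gc G Dc D p a b := by
  obtain ⟨a, ha⟩ := exists_isBDComponent hGc hP.le_left ⟨p.1, hu⟩
  obtain ⟨vb, hvb⟩ := exists_isBDComponent hDc hP.le_right ⟨p.2, hv⟩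
  obtain ⟨w, hw, -⟩ := hP.symm.exists_mem_BD_of_mem_BD hvb.mem_BD
  exact ⟨a, w, hu, hv, vb, ha, hvb, hw⟩

lemma IsDualPair.mem_BD_of_isBoundaryData (hP : IsDualPair Gc G Dc D) {p : H₀ × H₁}
    {a b : G.domain} (hab : IsBoundaryData Gc G Dc D p a b) : a ∈ BD Gc G ∧ b ∈ BD Gc G := by
  obtain ⟨_, _, vb, ha, hvb, hb⟩ := hab
  obtain ⟨w, hw, -, hwBD⟩ := hP.symm.exists_mem_BD_of_mem_BD hvb.mem_BD
  obtain rfl : b = w := Subtype.ext (hb.trans hw.symm)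
  exact ⟨ha.mem_BD, hwBD⟩

lemma IsDualPair.exists_isBoundaryData_of_mem_BD (hP : IsDualPair Gc G Dc D) {a b : G.domain}
    (ha : a ∈ BD Gc G) (hb : b ∈ BD Gc G) : ∃ p, IsBoundaryData Gc G Dc D p a b := by
  obtain ⟨v, -, hDv, hvBD⟩ := hP.exists_mem_BD_of_mem_BD hb
  exact ⟨((a : H₀), (v : H₁)), a.2, v.2, v, isBDComponent_self ha, isBDComponent_self hvBD,
    hDv.symm⟩

lemma IsDualPair.exists_mem_boundaryRel (hP : IsDualPair Gc G Dc D) (hGc : Gc.IsClosed)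
    (hDc : Dc.IsClosed) (hA : A ⊆ blockRel G D) {r : (H₀ × H₁) × (H₀ × H₁)} (hr : r ∈ A) :
    ∃ a b, IsBoundaryData Gc G Dc D r.1 a b ∧ (a, b) ∈ boundaryRel Gc G Dc D A := by
  obtain ⟨hu, hv, -⟩ := hA hr
  obtain ⟨a, b, hab⟩ := hP.exists_isBoundaryData hGc hDc hu hv
  exact ⟨a, b, hab, r.1, ⟨r.2, hr⟩, hab⟩

lemma IsDualPair.monotoneRelWRT_boundaryRel (hP : IsDualPair Gc G Dc D)
    (hA : A ⊆ blockRel G D) (hAmono : MonotoneRelWRT ipProd A) :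
    MonotoneRelWRT (gip G) (boundaryRel Gc G Dc D A) := by
  rintro ⟨a, b⟩ ⟨p, ⟨q, hpq⟩, hab⟩ ⟨a', b'⟩ ⟨p', ⟨q', hpq'⟩, hab'⟩
  rw [← hP.re_ipProd_sub_eq_re_gip_sub (hA hpq) (hA hpq') hab hab']
  exact hAmono _ hpq _ hpq'

/-- Adding `(p, q)` to `A` keeps it monotone, so by maximality it is already in `A`. -/
lemma IsDualPair.mem_of_isBoundaryData (hP : IsDualPair Gc G Dc D) (hGc : Gc.IsClosed)
    (hDc : Dc.IsClosed) (hA : A ⊆ blockRel G D) (hAmax : MaximalMonotoneRelWRT ipProd A)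
    {h : Set (G.domain × G.domain)} (hh : MonotoneRelWRT (gip G) h)
    (hsub : boundaryRel Gc G Dc D A ⊆ h) {p q : H₀ × H₁} (hpq : (p, q) ∈ blockRel G D)
    {a b : G.domain} (hab : IsBoundaryData Gc G Dc D p a b) (habh : (a, b) ∈ h) :
    (p, q) ∈ A := by
  refine hAmax.mem_of_monotoneRelWRT_insert
    (hP.monotoneRelWRT_of_isBoundaryData hh (Set.insert_subset hpq hA) ?_)
  rintro r (rfl | hr)
  · exact ⟨a, b, hab, habh⟩
  · obtain ⟨a', b', hab', habh'⟩ := hP.exists_mem_boundaryRel hGc hDc hA hr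
    exact ⟨a', b', hab', hsub habh'⟩

lemma IsDualPair.maxMonBD_boundaryRel (hP : IsDualPair Gc G Dc D) (hGc : Gc.IsClosed)
    (hDc : Dc.IsClosed) (hA : A ⊆ blockRel G D) (hAmax : MaximalMonotoneRelWRT ipProd A) :
    MaxMonBD G (BD Gc G) (boundaryRel Gc G Dc D A) := by
  refine ⟨?_, hP.monotoneRelWRT_boundaryRel hA hAmax.1, fun h hhBD hh hsub => ?_⟩
  · rintro ⟨a, b⟩ ⟨p, -, hab⟩
    exact hP.mem_BD_of_isBoundaryData hab
  · refine Set.Subset.antisymm ?_ hsub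
    rintro ⟨a, b⟩ habh
    obtain ⟨p, hab⟩ := hP.exists_isBoundaryData_of_mem_BD (hhBD habh).1 (hhBD habh).2
    obtain ⟨q, hpq⟩ := hab.exists_mem_blockRel
    exact ⟨p, ⟨q, hP.mem_of_isBoundaryData hGc hDc hA hAmax hh hsub hpq hab habh⟩, hab⟩

lemma IsDualPair.exists_mem_iff_domCond (hP : IsDualPair Gc G Dc D) (hGc : Gc.IsClosed)
    (hDc : Dc.IsClosed) (hA : A ⊆ blockRel G D) (hAmax : MaximalMonotoneRelWRT ipProd A)
    (p : H₀ × H₁) : (∃ q, (p, q) ∈ A) ↔ DomCond Gc G Dc D (boundaryRel Gc G Dc D A) p := by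
  rw [domCond_iff]
  constructor
  · rintro ⟨q, hpq⟩
    exact hP.exists_mem_boundaryRel hGc hDc hA hpq
  · rintro ⟨a, b, hab, habh⟩
    obtain ⟨q, hpq⟩ := hab.exists_mem_blockRel
    exact ⟨q, hP.mem_of_isBoundaryData hGc hDc hA hAmax
      (hP.monotoneRelWRT_boundaryRel hA hAmax.1) subset_rfl hpq hab habh⟩

end BlockOperator

/-- If a restriction `A` of the block operator `(u,v) ↦ (Dv, Gu)` is maximal monotone
on `H₀ ⊕ H₁`, then its domain is given by a maximal monotone boundary relation
`h ⊆ BD(G) ⊕ BD(G)`. -/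
theorem bd_relation_of_maximalMonotone {H₀ H₁ : Type*}
    [NormedAddCommGroup H₀] [InnerProductSpace ℂ H₀] [CompleteSpace H₀]
    [NormedAddCommGroup H₁] [InnerProductSpace ℂ H₁] [CompleteSpace H₁]
    (Gc : H₀ →ₗ.[ℂ] H₁) (Dc : H₁ →ₗ.[ℂ] H₀)
    (hGc_dense : Dense (Gc.domain : Set H₀)) (hDc_dense : Dense (Dc.domain : Set H₁))
    (hGc_closed : Gc.IsClosed) (hDc_closed : Dc.IsClosed)
    (hle : Gc ≤ -Dc.adjoint)
    (G : H₀ →ₗ.[ℂ] H₁) (D : H₁ →ₗ.[ℂ] H₀)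
    (hG : G = -Dc.adjoint) (hD : D = -Gc.adjoint)
    (A : Set ((H₀ × H₁) × (H₀ × H₁))) (hA : A ⊆ blockRel G D)
    (hAmax : MaximalMonotoneRelWRT ipProd A) :
    ∃ h : Set (G.domain × G.domain), MaxMonBD G (BD Gc G) h ∧
      ∀ p : H₀ × H₁, (∃ q, (p, q) ∈ A) ↔ DomCond Gc G Dc D h p := by
  have hP : IsDualPair Gc G Dc D := ⟨hGc_dense, hDc_dense, hG ▸ hle, hG, hD⟩
  exact ⟨boundaryRel Gc G Dc D A, hP.maxMonBD_boundaryRel hGc_closed hDc_closed hA hAmax,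
    hP.exists_mem_iff_domCond hGc_closed hDc_closed hA hAmax⟩
end

section
/- Let A be a maximal monotone restriction of the block operator (u,v) ↦ (Dv, Gu), where G := −D_c*, D := −G_c* for densely defined closed G_c ⊆ −D_c*. Then for (u,v) ∈ D(G) × D(D), one has (u,v) ∈ D(A) if and only if (P_{BD(G)}u, P_{BD(D)}v) ∈ D(A), where P_{BD(G)} and P_{BD(D)} denote the orthogonal projections onto BD(G) in H¹(|G|+i) and onto BD(D) in H¹(|D|+i) respectively (viewed as idempotents on the domains). -/
/-! If `uc ∈ D(G_c)` and `vc ∈ D(D_c)`, translating a maximal monotone restriction `A` of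
`(u,v) ↦ (Dv, Gu)` by `s = (uc, vc)` in the argument and by `t = (D_c vc, G_c uc)` in the value
maps `A` into itself. Indeed, since `G = -D_c*` and `D = -G_c*`, the real parts of
`⟪r₁, t⟫ + ⟪s, r₂⟫` (for `(r₁, r₂) ∈ A`) and of `⟪s, t⟫` vanish, so `A` together with its
translate is still monotone, and maximality absorbs the translate. Translating by `±(uc, vc)`
moves between `(u, v)` and `(ub, vb)`. -/

section MaximalMonotone

variable {H : Type*} [AddCommGroup H] [Module ℂ H]

theorem MaximalMonotoneRelWRT.add_mem_of_skew {B : H →ₗ⋆[ℂ] H →ₗ[ℂ] ℂ}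
    {A : Set (H × H)} (hA : MaximalMonotoneRelWRT (fun x y => B x y) A) {s t : H}
    (hst : (B s t).re = 0) (hcross : ∀ r ∈ A, (B r.1 t + B s r.2).re = 0)
    {p : H × H} (hp : p ∈ A) : (p.1 + s, p.2 + t) ∈ A := by
  have shifted : ∀ r ∈ A, ∀ r' ∈ A, 0 ≤ (B (r.1 - r'.1 + s) (r.2 - r'.2 + t)).re := by
    intro r hr r' hr'
    have hmono := hA.1 r hr r' hr'
    have hr := hcross r hr
    have hr' := hcross r' hr'
    simp only [map_add, map_sub, LinearMap.add_apply, LinearMap.sub_apply, Complex.add_re,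
      Complex.sub_re] at hmono hr hr' ⊢
    linarith
  let A' := A ∪ (fun r => (r.1 + s, r.2 + t)) '' A
  have hA'_mono : MonotoneRelWRT (fun x y => B x y) A' := by
    rintro _ (hq | ⟨r, hr, rfl⟩) _ (hq' | ⟨r', hr', rfl⟩)
    · exact hA.1 _ hq _ hq'
    · dsimp only
      rw [← neg_sub, ← neg_sub (_ + t)]
      simp only [map_neg, LinearMap.neg_apply, neg_neg]
      simpa only [add_sub_right_comm] using shifted r' hr' _ hq
    · dsimp only
      simpa only [add_sub_right_comm] using shifted r hr _ hq'
    · dsimp only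
      simpa only [add_sub_add_right_eq_sub] using hA.1 r hr r' hr'
  have hA' : A' = A := hA.2 A' hA'_mono Set.subset_union_left
  exact hA' ▸ Or.inr ⟨p, hp, rfl⟩

end MaximalMonotone

theorem LinearPMap.re_inner_adjoint_eq {𝕜 E F : Type*} [RCLike 𝕜]
    [NormedAddCommGroup E] [InnerProductSpace 𝕜 E] [CompleteSpace E]
    [NormedAddCommGroup F] [InnerProductSpace 𝕜 F] {T : E →ₗ.[𝕜] F}
    (hT : Dense (T.domain : Set E)) (x : T.adjoint.domain) (y : T.domain) :
    RCLike.re (inner 𝕜 (y : E) (T.adjoint x)) = RCLike.re (inner 𝕜 (x : F) (T y)) := by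
  rw [← T.adjoint_isFormalAdjoint hT x y, ← inner_conj_symm, RCLike.conj_re]

section BlockOperator

variable {H₀ H₁ : Type*} [NormedAddCommGroup H₀] [InnerProductSpace ℂ H₀]
    [NormedAddCommGroup H₁] [InnerProductSpace ℂ H₁]

variable (H₀ H₁) in
noncomputable def ipProdₛₗ : H₀ × H₁ →ₗ⋆[ℂ] H₀ × H₁ →ₗ[ℂ] ℂ :=
  ((innerₛₗ ℂ).comp (LinearMap.fst ℂ H₀ H₁)).compl₂ (LinearMap.fst ℂ H₀ H₁) +
    ((innerₛₗ ℂ).comp (LinearMap.snd ℂ H₀ H₁)).compl₂ (LinearMap.snd ℂ H₀ H₁)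

@[simp]
theorem ipProdₛₗ_apply (p q : H₀ × H₁) : ipProdₛₗ H₀ H₁ p q = ipProd p q :=
  rfl

variable [CompleteSpace H₀] [CompleteSpace H₁]

theorem blockRel_add_core_mem {Gc : H₀ →ₗ.[ℂ] H₁} {Dc : H₁ →ₗ.[ℂ] H₀}
    (hGc_dense : Dense (Gc.domain : Set H₀)) (hDc_dense : Dense (Dc.domain : Set H₁))
    (hle : Gc ≤ -Dc.adjoint) {A : Set ((H₀ × H₁) × (H₀ × H₁))}
    (hA : A ⊆ blockRel (-Dc.adjoint) (-Gc.adjoint)) (hAmax : MaximalMonotoneRelWRT ipProd A)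
    (uc : Gc.domain) (vc : Dc.domain) {p : (H₀ × H₁) × (H₀ × H₁)} (hp : p ∈ A) :
    ((p.1.1 + uc, p.1.2 + vc), (p.2.1 + Dc vc, p.2.2 + Gc uc)) ∈ A := by
  have hAmaxₛₗ : MaximalMonotoneRelWRT (fun x y => ipProdₛₗ H₀ H₁ x y) A := hAmax
  refine hAmaxₛₗ.add_mem_of_skew (s := ((uc : H₀), (vc : H₁))) (t := (Dc vc, Gc uc)) ?_ ?_ hp
  · have hGc_uc : Gc uc = -Dc.adjoint ⟨uc, hle.1 uc.2⟩ := hle.2 rfl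
    have := Dc.re_inner_adjoint_eq hDc_dense ⟨uc, hle.1 uc.2⟩ vc
    simp only [ipProdₛₗ_apply, ipProd, hGc_uc, inner_neg_right, Complex.add_re, Complex.neg_re,
      RCLike.re_to_complex] at this ⊢
    linarith
  · intro r hr
    obtain ⟨hx, hy, hr₁, hr₂⟩ := hA hr
    have hD := Dc.re_inner_adjoint_eq hDc_dense ⟨r.1.1, hx⟩ vc
    have hG := Gc.re_inner_adjoint_eq hGc_dense ⟨r.1.2, hy⟩ uc
    simp only [ipProdₛₗ_apply, ipProd, hr₁, hr₂, LinearPMap.neg_apply, inner_neg_right,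
      Complex.add_re, Complex.neg_re, RCLike.re_to_complex] at hD hG ⊢
    linarith

theorem exists_blockRel_add_core {Gc : H₀ →ₗ.[ℂ] H₁} {Dc : H₁ →ₗ.[ℂ] H₀}
    (hGc_dense : Dense (Gc.domain : Set H₀)) (hDc_dense : Dense (Dc.domain : Set H₁))
    (hle : Gc ≤ -Dc.adjoint) {A : Set ((H₀ × H₁) × (H₀ × H₁))}
    (hA : A ⊆ blockRel (-Dc.adjoint) (-Gc.adjoint)) (hAmax : MaximalMonotoneRelWRT ipProd A)
    (uc : Gc.domain) (vc : Dc.domain) {x : H₀ × H₁} (hx : ∃ q, (x, q) ∈ A) :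
    ∃ q, ((x.1 + uc, x.2 + vc), q) ∈ A :=
  let ⟨_, hq⟩ := hx
  ⟨_, blockRel_add_core_mem hGc_dense hDc_dense hle hA hAmax uc vc hq⟩

end BlockOperator

theorem bd_domain_projection_general {H₀ H₁ : Type*}
    [NormedAddCommGroup H₀] [InnerProductSpace ℂ H₀] [CompleteSpace H₀]
    [NormedAddCommGroup H₁] [InnerProductSpace ℂ H₁] [CompleteSpace H₁]
    (Gc : H₀ →ₗ.[ℂ] H₁) (Dc : H₁ →ₗ.[ℂ] H₀)
    (hGc_dense : Dense (Gc.domain : Set H₀)) (hDc_dense : Dense (Dc.domain : Set H₁))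
    (hle : Gc ≤ -Dc.adjoint)
    (G : H₀ →ₗ.[ℂ] H₁) (D : H₁ →ₗ.[ℂ] H₀)
    (hG : G = -Dc.adjoint) (hD : D = -Gc.adjoint)
    (A : Set ((H₀ × H₁) × (H₀ × H₁))) (hA : A ⊆ blockRel G D)
    (hAmax : MaximalMonotoneRelWRT ipProd A)
    (u uc ub : G.domain) (v vc vb : D.domain)
    (huc : (uc : H₀) ∈ Gc.domain) (hu : u = uc + ub)
    (hvc : (vc : H₁) ∈ Dc.domain) (hv : v = vc + vb) :
    (∃ q, (((u : H₀), (v : H₁)), q) ∈ A) ↔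
      (∃ q, (((ub : H₀), (vb : H₁)), q) ∈ A) := by
  subst hG hD
  have hu' : (u : H₀) = ub + uc := by rw [hu, add_comm]; rfl
  have hv' : (v : H₁) = vb + vc := by rw [hv, add_comm]; rfl
  constructor
  · intro h
    simpa [hu', hv'] using
      exists_blockRel_add_core hGc_dense hDc_dense hle hA hAmax (-⟨uc, huc⟩) (-⟨vc, hvc⟩) h
  · intro h
    simpa [hu', hv'] using
      exists_blockRel_add_core hGc_dense hDc_dense hle hA hAmax ⟨uc, huc⟩ ⟨vc, hvc⟩ h

/-- For a maximal monotone restriction `A` of the block operator, a pair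
`(u,v) ∈ D(G) × D(D)` lies in the domain of `A` iff the pair of its boundary parts
`(P_{BD(G)}u, P_{BD(D)}v)` does. -/
theorem bd_domain_projection {H₀ H₁ : Type*}
    [NormedAddCommGroup H₀] [InnerProductSpace ℂ H₀] [CompleteSpace H₀]
    [NormedAddCommGroup H₁] [InnerProductSpace ℂ H₁] [CompleteSpace H₁]
    (Gc : H₀ →ₗ.[ℂ] H₁) (Dc : H₁ →ₗ.[ℂ] H₀)
    (hGc_dense : Dense (Gc.domain : Set H₀)) (hDc_dense : Dense (Dc.domain : Set H₁))
    (hGc_closed : Gc.IsClosed) (hDc_closed : Dc.IsClosed)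
    (hle : Gc ≤ -Dc.adjoint)
    (G : H₀ →ₗ.[ℂ] H₁) (D : H₁ →ₗ.[ℂ] H₀)
    (hG : G = -Dc.adjoint) (hD : D = -Gc.adjoint)
    (A : Set ((H₀ × H₁) × (H₀ × H₁))) (hA : A ⊆ blockRel G D)
    (hAmax : MaximalMonotoneRelWRT ipProd A)
    (u uc ub : G.domain) (v vc vb : D.domain)
    (huc : (uc : H₀) ∈ Gc.domain) (hub : ub ∈ BD Gc G) (hu : u = uc + ub)
    (hvc : (vc : H₁) ∈ Dc.domain) (hvb : vb ∈ BD Dc D) (hv : v = vc + vb) :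
    (∃ q, (((u : H₀), (v : H₁)), q) ∈ A) ↔
      (∃ q, (((ub : H₀), (vb : H₁)), q) ∈ A) :=
  bd_domain_projection_general Gc Dc hGc_dense hDc_dense hle G D hG hD A hA hAmax u uc ub v vc vb
    huc hu hvc hv
end

section
/- Let V ∈ ℂⁿˣⁿ satisfy V*V ≤ 1 and let S ∈ ℂⁿˣⁿ be selfadjoint and strictly positive definite. Then the matrix −S(1+V) − (1−V) is injective (equivalently, invertible). -/
open Matrix
open scoped ComplexOrder

/-!
Suppose `M x = 0` for `M = S (1 + V) + (1 - V)`. Pairing `M x` with `(1 + V) x` and taking twice the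
real part gives `2 (⟨(1 + V) x, S (1 + V) x⟩ + ⟨x, (1 - V*V) x⟩)`, a sum of two nonnegative terms that
must therefore both vanish. Strict positivity of `S` forces `(1 + V) x = 0`, hence `(1 - V) x = M x = 0`,
and adding the two gives `x = 0`.
-/

namespace Matrix

variable {ι : Type*} [Fintype ι]

lemma conjTranspose_one_add_mul_add_conjTranspose_mul_one_add [DecidableEq ι] {R : Type*}
    [CommRing R] [StarRing R] {S : Matrix ι ι R} (hS : S.IsHermitian) (V : Matrix ι ι R) :
    (1 + V)ᴴ * (S * (1 + V) + (1 - V)) + (S * (1 + V) + (1 - V))ᴴ * (1 + V) =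
      2 • ((1 + V)ᴴ * S * (1 + V) + (1 - Vᴴ * V)) := by
  simp only [conjTranspose_add, conjTranspose_sub, conjTranspose_mul, conjTranspose_one, hS.eq]
  noncomm_ring

lemma star_dotProduct_mulVec_conjTranspose_mul_add_eq_zero {R : Type*} [CommSemiring R]
    [StarRing R] (B : Matrix ι ι R) {M : Matrix ι ι R} {x : ι → R} (hx : M *ᵥ x = 0) :
    star x ⬝ᵥ (Bᴴ * M + Mᴴ * B) *ᵥ x = 0 := by
  rw [add_mulVec, ← mulVec_mulVec, ← mulVec_mulVec, hx, mulVec_zero, zero_add,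
    dotProduct_mulVec, ← star_mulVec, hx, star_zero, zero_dotProduct]

lemma PosSemidef.star_dotProduct_mulVec_eq_zero_of_add {R : Type*} [CommRing R] [PartialOrder R]
    [StarRing R] [IsOrderedAddMonoid R] {A B : Matrix ι ι R} (hA : A.PosSemidef)
    (hB : B.PosSemidef) {x : ι → R} (h : star x ⬝ᵥ (A + B) *ᵥ x = 0) :
    star x ⬝ᵥ A *ᵥ x = 0 := by
  rw [add_mulVec, dotProduct_add] at h
  exact ((add_eq_zero_iff_of_nonneg (hA.dotProduct_mulVec_nonneg x)
    (hB.dotProduct_mulVec_nonneg x)).1 h).1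

lemma PosDef.mulVec_injective_mul_one_add_add_one_sub [DecidableEq ι] {𝕜 : Type*} [RCLike 𝕜]
    {S V : Matrix ι ι 𝕜} (hS : S.PosDef) (hV : (1 - Vᴴ * V).PosSemidef) :
    Function.Injective (S * (1 + V) + (1 - V)).mulVec := by
  set M := S * (1 + V) + (1 - V)
  refine (injective_iff_map_eq_zero M.mulVecLin).2 fun x (hx : M *ᵥ x = 0) => ?_
  have hform : star x ⬝ᵥ ((1 + V)ᴴ * S * (1 + V) + (1 - Vᴴ * V)) *ᵥ x = 0 := by
    have h := star_dotProduct_mulVec_conjTranspose_mul_add_eq_zero (1 + V) hx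
    rwa [conjTranspose_one_add_mul_add_conjTranspose_mul_one_add hS.isHermitian, smul_mulVec,
      dotProduct_smul, smul_eq_zero, or_iff_right two_ne_zero] at h
  have hSform : star ((1 + V) *ᵥ x) ⬝ᵥ S *ᵥ ((1 + V) *ᵥ x) = 0 := by
    have h := (hS.posSemidef.conjTranspose_mul_mul_same (1 + V)).star_dotProduct_mulVec_eq_zero_of_add
      hV hform
    rwa [← mulVec_mulVec, ← mulVec_mulVec, dotProduct_mulVec, ← star_mulVec] at h
  have hplus : (1 + V) *ᵥ x = 0 := by
    by_contra hne
    exact (hS.dotProduct_mulVec_pos hne).ne' hSform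
  have hminus : (1 - V) *ᵥ x = 0 := by
    rwa [add_mulVec, ← mulVec_mulVec, hplus, mulVec_zero, zero_add] at hx
  have htwo : (2 : ℕ) • x = 0 := by
    rw [two_nsmul, ← hplus, ← sub_eq_zero, ← hminus]
    simp only [add_mulVec, sub_mulVec, one_mulVec]
    abel
  exact (smul_eq_zero.1 htwo).resolve_left two_ne_zero

end Matrix

/-- If `V*V ≤ 1` and `S` is selfadjoint and strictly positive definite, then
`−S(1+V) − (1−V)` is injective. -/
theorem neg_S_one_add_V_injective {n : ℕ} (V S : Matrix (Fin n) (Fin n) ℂ)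
    (hV : (1 - Vᴴ * V).PosSemidef) (hS : S.PosDef) :
    Function.Injective (-(S * (1 + V)) - (1 - V)).mulVec := by
  rw [← neg_add']
  intro x y h
  simp only [neg_mulVec, neg_inj] at h
  exact hS.mulVec_injective_mul_one_add_add_one_sub hV h
end
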